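/- arXiv:1601.06375 — 5 statements merged into one kernel-verified Lean document; each statement's English description precedes it below -/
import Mathlib

section
/- Let r be an even integer with 2 ≤ r < m and let Q : F_q^m → F_q be the Type I quadratic form Q(x) = B_r(x). Let b ∈ F_q^m be such that b_i ≠ 0 for some index i with r < i ≤ m. Then for all a, v ∈ F_q, N(a,v) = q^{m-2} + I(a)·q^{m-2-r/2}. -/
open Finset

/-- `Bform j x = x₁x₂ + x₃x₄ + ⋯ + x_{2j-1}x_{2j}` (1-based indexing), i.e. the
quadratic form `B_{2j}` in `m` variables. -/
def Bform {F : Type*} [CommRing F] {m : ℕ} (j : ℕ) (x : Fin m → F) : F :=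
  ∑ i ∈ Finset.range j,
    if h : 2 * i + 1 < m then x ⟨2 * i, by omega⟩ * x ⟨2 * i + 1, h⟩ else 0

/-- `I(0) = q - 1` and `I(c) = -1` for `c ≠ 0`. -/
def Ifun {F : Type*} [Zero F] [DecidableEq F] (q : ℕ) (c : F) : ℤ :=
  if c = 0 then (q : ℤ) - 1 else -1

/-- The linear function `L_b(x) = b₁x₁ + ⋯ + b_m x_m`. -/
def Lfun {F : Type*} [CommRing F] {m : ℕ} (b x : Fin m → F) : F :=
  ∑ i, b i * x i

/-! ### Auxiliary lemmas -/

lemma sum_Ifun {F : Type*} [Fintype F] [DecidableEq F] [Zero F] :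
    ∑ c : F, Ifun (Fintype.card F) c = 0 := by
  have h1 : ∀ c : F, Ifun (Fintype.card F) c
      = (if c = 0 then (Fintype.card F : ℤ) else 0) - 1 := by
    intro c; unfold Ifun; split <;> simp
  simp only [h1, Finset.sum_sub_distrib, Finset.sum_ite_eq', Finset.mem_univ, if_true,
    Finset.sum_const, Finset.card_univ, nsmul_eq_mul, mul_one, sub_self]

lemma card_filter_equiv {α β : Type*} [Fintype α] [Fintype β] (e : α ≃ β) (p : β → Prop)
    [DecidablePred p] :
    (univ.filter (fun a => p (e a))).card = (univ.filter p).card := by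
  rw [Finset.card_filter, Finset.card_filter,
    ← Equiv.sum_comp e (fun b => if p b then 1 else 0)]

lemma card_filter_prod {α β : Type*} [Fintype α] [Fintype β] (R : α → β → Prop)
    [∀ a b, Decidable (R a b)] :
    (univ.filter (fun z : α × β => R z.1 z.2)).card
      = ∑ h : α, (univ.filter (fun t => R h t)).card := by
  simp only [Finset.card_filter, Fintype.sum_prod_type]

lemma linear_count {F : Type*} [Field F] [Fintype F] [DecidableEq F] {n : ℕ} (b : Fin n → F)
    (i : Fin n) (hb : b i ≠ 0) (c : F) :
    (univ.filter (fun x : Fin n → F => Lfun b x = c)).card = Fintype.card F ^ (n - 1) := by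
  classical
  have hphi : ∀ (x : Fin n → F) (t : F), Lfun b (x + Pi.single i t) = Lfun b x + b i * t := by
    intro x t
    unfold Lfun
    simp only [Pi.add_apply, mul_add, Finset.sum_add_distrib]
    congr 1
    rw [Fintype.sum_eq_single i]
    · simp
    · intro k hk; simp [Pi.single_eq_of_ne hk]
  have key : ∀ c1 c2 : F, (univ.filter (fun x : Fin n → F => Lfun b x = c1)).card
      = (univ.filter (fun x : Fin n → F => Lfun b x = c2)).card := by
    intro c1 c2
    apply Finset.card_bij' (fun x _ => x + Pi.single i ((c2 - c1) / b i))
      (fun x _ => x + Pi.single i ((c1 - c2) / b i))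
    · intro x _
      rw [add_assoc, ← Pi.single_add, ← add_div]
      simp
    · intro x _
      rw [add_assoc, ← Pi.single_add, ← add_div]
      simp
    · intro x hx
      simp only [Finset.mem_filter, Finset.mem_univ, true_and] at hx ⊢
      rw [hphi, hx, mul_div_cancel₀ _ hb]; ring
    · intro x hx
      simp only [Finset.mem_filter, Finset.mem_univ, true_and] at hx ⊢
      rw [hphi, hx, mul_div_cancel₀ _ hb]; ring
  have total : (Finset.univ : Finset (Fin n → F)).card
      = ∑ c2 : F, (univ.filter (fun x : Fin n → F => Lfun b x = c2)).card :=
    Finset.card_eq_sum_card_fiberwise (fun x _ => Finset.mem_univ _)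
  have total2 : Fintype.card F ^ n
      = Fintype.card F * (univ.filter (fun x : Fin n → F => Lfun b x = c)).card := by
    have : ∀ c2 : F, (univ.filter (fun x : Fin n → F => Lfun b x = c2)).card
        = (univ.filter (fun x : Fin n → F => Lfun b x = c)).card := fun c2 => key c2 c
    calc Fintype.card F ^ n = Fintype.card (Fin n → F) := by simp
      _ = _ := by
        rw [← Finset.card_univ, total, Finset.sum_congr rfl (fun c2 _ => this c2),
          Finset.sum_const, Finset.card_univ, smul_eq_mul]
  have hn : 1 ≤ n := by have := i.isLt; omega
  have hq0 : 0 < Fintype.card F := Fintype.card_pos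
  have : Fintype.card F * Fintype.card F ^ (n - 1)
      = Fintype.card F * (univ.filter (fun x : Fin n → F => Lfun b x = c)).card := by
    rw [← total2, ← pow_succ']
    congr 1
    omega
  exact (Nat.eq_of_mul_eq_mul_left hq0 this).symm

lemma pair_count {F : Type*} [Field F] [Fintype F] [DecidableEq F] (a : F) :
    ((univ.filter (fun z : F × F => z.1 * z.2 = a)).card : ℤ)
      = (Fintype.card F : ℤ) + Ifun (Fintype.card F) a := by
  classical
  rw [card_filter_prod (fun u w : F => u * w = a)]
  have h : ∀ u : F, ((univ.filter (fun w : F => u * w = a)).card : ℤ)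
      = (if u = 0 then (if a = 0 then (Fintype.card F : ℤ) else 0) - 1 else 0) + 1 := by
    intro u
    by_cases hu : u = 0
    · subst hu
      by_cases ha : a = 0
      · subst ha
        simp [Finset.filter_true_of_mem, Finset.card_univ]
      · rw [if_pos rfl, if_neg ha]
        have h2 : (univ.filter (fun w : F => 0 * w = a)) = ∅ := by
          apply Finset.filter_false_of_mem
          intro w _
          simp [Ne.symm ha]
        rw [h2]
        simp
    · rw [if_neg hu]
      have : (univ.filter (fun w : F => u * w = a)) = {a / u} := by
        ext w
        simp only [Finset.mem_filter, Finset.mem_univ, true_and, Finset.mem_singleton]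
        rw [eq_div_iff hu, mul_comm]
      rw [this]
      simp
  push_cast
  rw [Finset.sum_congr rfl (fun u _ => h u), Finset.sum_add_distrib,
    Finset.sum_ite_eq' Finset.univ (0 : F)
      (fun _ => (if a = 0 then (Fintype.card F : ℤ) else 0) - 1)]
  simp only [Finset.mem_univ, if_true, Finset.sum_const, Finset.card_univ, nsmul_eq_mul, mul_one]
  unfold Ifun
  split <;> ring

lemma key_sum {F : Type*} [Field F] [Fintype F] [DecidableEq F] (a : F) :
    ∑ z : F × F, Ifun (Fintype.card F) (a - z.1 * z.2)
      = (Fintype.card F : ℤ) * Ifun (Fintype.card F) a := by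
  rw [Fintype.sum_prod_type]
  rw [Fintype.sum_eq_single (0 : F)]
  · simp [Finset.sum_const, Finset.card_univ, mul_comm]
  · intro u hu
    have : ∑ w : F, Ifun (Fintype.card F) (a - u * w)
        = ∑ cc : F, Ifun (Fintype.card F) cc :=
      Equiv.sum_comp ((Equiv.mulLeft₀ u hu).trans (Equiv.subLeft a))
        (Ifun (Fintype.card F))
    rw [this, sum_Ifun]

lemma quad_count {F : Type*} [Field F] [Fintype F] [DecidableEq F] (j : ℕ) (a : F) :
    ((univ.filter (fun y : Fin (j + 1) → F × F => ∑ i, (y i).1 * (y i).2 = a)).card : ℤ)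
      = (Fintype.card F : ℤ) ^ (2 * j + 1)
        + Ifun (Fintype.card F) a * (Fintype.card F : ℤ) ^ j := by
  classical
  induction j generalizing a with
  | zero =>
    rw [← card_filter_equiv (Equiv.funUnique (Fin 1) (F × F)).symm
      (fun y : Fin 1 → F × F => ∑ i, (y i).1 * (y i).2 = a)]
    simp only [Fin.sum_univ_one, Equiv.funUnique_symm_apply,
      show (0 : Fin 1) = default from rfl, uniqueElim_default]
    rw [pair_count a]
    ring
  | succ n ih =>
    rw [← card_filter_equiv (Fin.consEquiv (fun _ : Fin (n + 2) => F × F))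
      (fun y : Fin (n + 2) → F × F => ∑ i, (y i).1 * (y i).2 = a)]
    have hpred : ∀ z : (F × F) × (Fin (n + 1) → F × F),
        ((∑ i, (((Fin.consEquiv (fun _ : Fin (n + 2) => F × F)) z) i).1
          * (((Fin.consEquiv (fun _ : Fin (n + 2) => F × F)) z) i).2 = a))
        ↔ (∑ i, (z.2 i).1 * (z.2 i).2 = a - z.1.1 * z.1.2) := by
      intro z
      simp only [Fin.consEquiv, Equiv.coe_fn_mk, Fin.sum_univ_succ, Fin.cons_zero, Fin.cons_succ]
      exact ⟨fun h => by rw [← h]; ring, fun h => by rw [h]; ring⟩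
    rw [Finset.filter_congr (fun z _ => hpred z)]
    rw [card_filter_prod (fun (z1 : F × F) (y : Fin (n + 1) → F × F) =>
      ∑ i, (y i).1 * (y i).2 = a - z1.1 * z1.2)]
    push_cast
    rw [Finset.sum_congr rfl (fun z1 _ => ih (a - z1.1 * z1.2)), Finset.sum_add_distrib,
      Finset.sum_const, Finset.card_univ, ← Finset.sum_mul, key_sum, Fintype.card_prod]
    ring

/-- Interleaving map sending `z : Fin j → F × F` to the vector
`(z 0).1, (z 0).2, (z 1).1, (z 1).2, …` of length `j + j`. -/
def unpair {F : Type*} {j : ℕ} (z : Fin j → F × F) : Fin (j + j) → F :=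
  fun k => if h : (k : ℕ) % 2 = 0
    then (z ⟨(k : ℕ) / 2, by have := k.isLt; omega⟩).1
    else (z ⟨(k : ℕ) / 2, by have := k.isLt; omega⟩).2

lemma unpair_even {F : Type*} {j : ℕ} (z : Fin j → F × F) (i : Fin j)
    (h2 : 2 * (i : ℕ) < j + j) : unpair z ⟨2 * (i : ℕ), h2⟩ = (z i).1 := by
  unfold unpair
  rw [dif_pos (show 2 * (i : ℕ) % 2 = 0 by omega)]
  have hidx : (⟨2 * (i : ℕ) / 2, by have := i.isLt; omega⟩ : Fin j) = i :=
    Fin.ext (by show 2 * (i : ℕ) / 2 = (i : ℕ); omega)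
  exact congrArg (fun w => (z w).1) hidx

lemma unpair_odd {F : Type*} {j : ℕ} (z : Fin j → F × F) (i : Fin j)
    (h2 : 2 * (i : ℕ) + 1 < j + j) : unpair z ⟨2 * (i : ℕ) + 1, h2⟩ = (z i).2 := by
  unfold unpair
  rw [dif_neg (show ¬((2 * (i : ℕ) + 1) % 2 = 0) by omega)]
  have hidx : (⟨(2 * (i : ℕ) + 1) / 2, by have := i.isLt; omega⟩ : Fin j) = i :=
    Fin.ext (by show (2 * (i : ℕ) + 1) / 2 = (i : ℕ); omega)
  exact congrArg (fun w => (z w).2) hidx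

/-- The equivalence `(Fin j → F × F) ≃ (Fin (j + j) → F)` given by interleaving. -/
def pairEquiv (F : Type*) (j : ℕ) : (Fin j → F × F) ≃ (Fin (j + j) → F) where
  toFun := unpair
  invFun y i := (y ⟨2 * (i : ℕ), by have := i.isLt; omega⟩,
                 y ⟨2 * (i : ℕ) + 1, by have := i.isLt; omega⟩)
  left_inv z := by
    funext i
    have h2 : 2 * (i : ℕ) < j + j := by have := i.isLt; omega
    have h3 : 2 * (i : ℕ) + 1 < j + j := by have := i.isLt; omega
    exact Prod.ext (unpair_even z i h2) (unpair_odd z i h3)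
  right_inv y := by
    funext k
    unfold unpair
    by_cases h : (k : ℕ) % 2 = 0
    · rw [dif_pos h]
      have hidx : (⟨2 * ((k : ℕ) / 2), by have := k.isLt; omega⟩ : Fin (j + j)) = k :=
        Fin.ext (by show 2 * ((k : ℕ) / 2) = (k : ℕ); omega)
      exact congrArg y hidx
    · rw [dif_neg h]
      have hidx : (⟨2 * ((k : ℕ) / 2) + 1, by have := k.isLt; omega⟩ : Fin (j + j)) = k :=
        Fin.ext (by show 2 * ((k : ℕ) / 2) + 1 = (k : ℕ); omega)
      exact congrArg y hidx

lemma Bform_unpair {F : Type*} [CommRing F] {j : ℕ} (z : Fin j → F × F) :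
    Bform j (unpair z) = ∑ i, (z i).1 * (z i).2 := by
  unfold Bform
  rw [← Fin.sum_univ_eq_sum_range
    (fun i => if h : 2 * i + 1 < j + j then
      unpair z ⟨2 * i, by omega⟩ * unpair z ⟨2 * i + 1, h⟩ else 0) j]
  apply Finset.sum_congr rfl
  intro i _
  have h : 2 * (i : ℕ) + 1 < j + j := by have := i.isLt; omega
  rw [dif_pos h, unpair_even z i (by omega), unpair_odd z i h]

lemma Bform_append {F : Type*} [CommRing F] {j s : ℕ} (h : Fin (j + j) → F) (t : Fin s → F) :
    Bform j (Fin.append h t) = Bform j h := by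
  unfold Bform
  apply Finset.sum_congr rfl
  intro i hi
  rw [Finset.mem_range] at hi
  have h1 : 2 * i + 1 < (j + j) + s := by omega
  have h2 : 2 * i + 1 < j + j := by omega
  rw [dif_pos h1, dif_pos h2]
  congr 1
  · show Fin.append h t (Fin.castAdd s ⟨2 * i, by omega⟩) = h ⟨2 * i, by omega⟩
    rw [Fin.append_left]
  · show Fin.append h t (Fin.castAdd s ⟨2 * i + 1, h2⟩) = h ⟨2 * i + 1, h2⟩
    rw [Fin.append_left]

lemma Lfun_append {F : Type*} [CommRing F] {n s : ℕ} (b : Fin (n + s) → F)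
    (h : Fin n → F) (t : Fin s → F) :
    Lfun b (Fin.append h t) = Lfun (fun i => b (Fin.castAdd s i)) h
      + Lfun (fun i => b (Fin.natAdd n i)) t := by
  unfold Lfun
  rw [Fin.sum_univ_add (f := fun i => b i * Fin.append h t i)]
  simp [Fin.append_left, Fin.append_right]

theorem statement6 (p e q m r : ℕ) (F : Type*) [Field F] [Fintype F] [DecidableEq F]
    (hp : p.Prime) (hpodd : Odd p) (he : 0 < e) (hq : q = p ^ e)
    (hcard : Fintype.card F = q)
    (hreven : Even r) (hr2 : 2 ≤ r) (hrm : r < m)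
    (b : Fin m → F) (hb'' : ∃ i : Fin m, r ≤ (i : ℕ) ∧ b i ≠ 0)
    (a v : F) :
    ((univ.filter (fun x : Fin m → F => Bform (r / 2) x = a ∧ Lfun b x = v)).card : ℤ)
      = (q : ℤ) ^ (m - 2) + Ifun q a * (q : ℤ) ^ (m - 2 - r / 2) := by
  classical
  subst hcard
  obtain ⟨j, rfl⟩ := hreven
  obtain ⟨j', rfl⟩ : ∃ j', j = j' + 1 := ⟨j - 1, by omega⟩
  obtain ⟨s', rfl⟩ : ∃ s', m = ((j' + 1) + (j' + 1)) + (s' + 1) :=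
    ⟨m - ((j' + 1) + (j' + 1)) - 1, by omega⟩
  have hdiv : ((j' + 1) + (j' + 1)) / 2 = j' + 1 := by omega
  rw [hdiv]
  -- the tail coefficient vector has a nonzero entry
  obtain ⟨iw, hiw1, hiw2⟩ := hb''
  set bh : Fin ((j' + 1) + (j' + 1)) → F := fun i => b (Fin.castAdd (s' + 1) i) with hbh
  set bt : Fin (s' + 1) → F := fun i => b (Fin.natAdd ((j' + 1) + (j' + 1)) i) with hbtdef
  have hit : (iw : ℕ) - ((j' + 1) + (j' + 1)) < s' + 1 := by have := iw.isLt; omega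
  have hbt : bt ⟨(iw : ℕ) - ((j' + 1) + (j' + 1)), hit⟩ ≠ 0 := by
    have hix : Fin.natAdd ((j' + 1) + (j' + 1))
        (⟨(iw : ℕ) - ((j' + 1) + (j' + 1)), hit⟩ : Fin (s' + 1)) = iw := by
      apply Fin.ext
      show (j' + 1) + (j' + 1) + ((iw : ℕ) - ((j' + 1) + (j' + 1))) = (iw : ℕ)
      omega
    rw [hbtdef]
    simpa [hix] using hiw2
  -- transport along the append equivalence
  rw [← card_filter_equiv (Fin.appendEquiv (α := F) ((j' + 1) + (j' + 1)) (s' + 1))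
    (fun x => Bform (j' + 1) x = a ∧ Lfun b x = v)]
  have happ : ∀ w : (Fin ((j' + 1) + (j' + 1)) → F) × (Fin (s' + 1) → F),
      Fin.appendEquiv (α := F) ((j' + 1) + (j' + 1)) (s' + 1) w = Fin.append w.1 w.2 := fun w => rfl
  have hiff : ∀ w : (Fin ((j' + 1) + (j' + 1)) → F) × (Fin (s' + 1) → F),
      ((Bform (j' + 1) (Fin.appendEquiv (α := F) ((j' + 1) + (j' + 1)) (s' + 1) w) = a
        ∧ Lfun b (Fin.appendEquiv (α := F) ((j' + 1) + (j' + 1)) (s' + 1) w) = v))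
      ↔ (Bform (j' + 1) w.1 = a ∧ Lfun bt w.2 = v - Lfun bh w.1) := by
    intro w
    rw [happ, Bform_append, Lfun_append, ← hbh, ← hbtdef]
    exact and_congr_right fun _ => eq_sub_iff_add_eq'.symm
  rw [Finset.filter_congr (fun w _ => hiff w)]
  rw [card_filter_prod (fun (h : Fin ((j' + 1) + (j' + 1)) → F) (t : Fin (s' + 1) → F) =>
    Bform (j' + 1) h = a ∧ Lfun bt t = v - Lfun bh h)]
  have inner : ∀ h : Fin ((j' + 1) + (j' + 1)) → F,
      (univ.filter (fun t : Fin (s' + 1) → F =>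
        Bform (j' + 1) h = a ∧ Lfun bt t = v - Lfun bh h)).card
      = if Bform (j' + 1) h = a then Fintype.card F ^ s' else 0 := by
    intro h
    by_cases hB : Bform (j' + 1) h = a
    · rw [if_pos hB]
      have hfe : (univ.filter (fun t : Fin (s' + 1) → F =>
          Bform (j' + 1) h = a ∧ Lfun bt t = v - Lfun bh h))
          = univ.filter (fun t : Fin (s' + 1) → F => Lfun bt t = v - Lfun bh h) :=
        Finset.filter_congr (fun t _ => by simp [hB])
      rw [hfe]
      exact linear_count bt ⟨(iw : ℕ) - ((j' + 1) + (j' + 1)), hit⟩ hbt _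
    · rw [if_neg hB, Finset.card_eq_zero]
      apply Finset.filter_false_of_mem
      intro t _
      simp [hB]
  rw [Finset.sum_congr rfl (fun h _ => inner h), ← Finset.sum_filter, Finset.sum_const,
    smul_eq_mul]
  -- count of the quadratic-form part
  have hhead : ((univ.filter
        (fun h : Fin ((j' + 1) + (j' + 1)) → F => Bform (j' + 1) h = a)).card : ℤ)
      = (Fintype.card F : ℤ) ^ (2 * j' + 1)
        + Ifun (Fintype.card F) a * (Fintype.card F : ℤ) ^ j' := by
    rw [← card_filter_equiv (pairEquiv F (j' + 1))
      (fun h : Fin ((j' + 1) + (j' + 1)) → F => Bform (j' + 1) h = a)]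
    have hp : ∀ z : Fin (j' + 1) → F × F,
        (Bform (j' + 1) (pairEquiv F (j' + 1) z) = a)
        ↔ (∑ i, (z i).1 * (z i).2 = a) := by
      intro z
      rw [show pairEquiv F (j' + 1) z = unpair z from rfl, Bform_unpair]
    rw [Finset.filter_congr (fun z _ => hp z)]
    exact quad_count j' a
  have e1 : (j' + 1) + (j' + 1) + (s' + 1) - 2 = 2 * j' + s' + 1 := by omega
  have e2 : (j' + 1) + (j' + 1) + (s' + 1) - 2 - (j' + 1) = j' + s' := by omega
  rw [e2, e1]
  push_cast
  rw [hhead]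
  ring
end

section
/- Let n be a positive integer and let C ⊆ F_q^n be an F_q-linear subspace containing a nonzero vector. Let w_min and w_max denote respectively the minimum and maximum Hamming weights of the nonzero codewords of C. If q·w_min > (q−1)·w_max, then for any two nonzero codewords c, c' ∈ C, the support of c' is not a proper subset of the support of c; that is, all nonzero codewords of C are minimal. -/
open Finset

theorem statement15 (p e n : ℕ) (F : Type*) [Field F] [Fintype F] [DecidableEq F]
    (hp : p.Prime) (hpodd : Odd p) (he : 0 < e)
    (hcard : Fintype.card F = p ^ e)
    (hn : 0 < n)
    (C : Submodule F (Fin n → F))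
    (hC : ∃ c ∈ C, c ≠ 0)
    (wmin wmax : ℕ)
    (hwmin : IsLeast {w : ℕ | ∃ c ∈ C, c ≠ 0 ∧ hammingNorm c = w} wmin)
    (hwmax : IsGreatest {w : ℕ | ∃ c ∈ C, c ≠ 0 ∧ hammingNorm c = w} wmax)
    (h : Fintype.card F * wmin > (Fintype.card F - 1) * wmax) :
    ∀ c ∈ C, c ≠ 0 → ∀ c' ∈ C, c' ≠ 0 →
      ¬ ({i : Fin n | c' i ≠ 0} ⊂ {i : Fin n | c i ≠ 0}) := by
  intro c hc hc0 c' hc' hc'0 hss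
  set q := Fintype.card F with hq
  have hq2 : 2 ≤ q := Fintype.one_lt_card
  have hsub : ∀ i : Fin n, c' i ≠ 0 → c i ≠ 0 := fun i hi => hss.1 hi
  obtain ⟨i0, hi0c, hi0c'⟩ := Set.exists_of_ssubset hss
  simp only [Set.mem_setOf_eq, not_not] at hi0c hi0c'
  -- the per-coordinate counting identity
  have key : ∀ i : Fin n,
      ((univ.erase (0 : F)).filter (fun a => c i - a * c' i ≠ 0)).card
        + (if c' i ≠ 0 then 1 else 0)
      = (q - 1) * (if c i ≠ 0 then 1 else 0) := by
    intro i
    by_cases h1 : c' i ≠ 0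
    · have hci : c i ≠ 0 := hsub i h1
      set b := c i * (c' i)⁻¹ with hb
      have hb0 : b ≠ 0 := mul_ne_zero hci (inv_ne_zero h1)
      have hcond : ∀ a : F, (c i - a * c' i ≠ 0) ↔ a ≠ b := by
        intro a
        rw [sub_ne_zero, hb]
        constructor
        · intro hne he; exact hne (by rw [he, inv_mul_cancel_right₀ h1])
        · intro hne he; exact hne (by rw [he, mul_inv_cancel_right₀ h1])
      have heq : (univ.erase (0 : F)).filter (fun a => c i - a * c' i ≠ 0)
          = ((univ.erase (0 : F)).erase b) := by
        ext a
        simp only [Finset.mem_filter, Finset.mem_erase, Finset.mem_univ, and_true,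
          hcond a]
        tauto
      rw [heq, Finset.card_erase_of_mem (Finset.mem_erase.2 ⟨hb0, Finset.mem_univ _⟩),
        Finset.card_erase_of_mem (Finset.mem_univ _), if_pos h1, if_pos hci]
      have : Finset.univ.card = q := rfl
      omega
    · push_neg at h1
      simp only [h1, mul_zero, sub_zero, ne_eq, not_true_eq_false, if_false, add_zero]
      by_cases h2 : c i ≠ 0
      · rw [Finset.filter_true_of_mem (fun a _ => h2),
          Finset.card_erase_of_mem (Finset.mem_univ _)]
        simp [h2]
        rfl
      · push_neg at h2
        simp [h2]
  -- sum the identity over all coordinates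
  have hsum : (∑ a ∈ univ.erase (0 : F), hammingNorm (c - a • c')) + hammingNorm c'
      = (q - 1) * hammingNorm c := by
    have hnorm : ∀ a : F, hammingNorm (c - a • c')
        = ∑ i : Fin n, (if c i - a * c' i ≠ 0 then 1 else 0) := by
      intro a
      rw [hammingNorm, Finset.card_filter]
      exact Finset.sum_congr rfl (fun i _ => by simp [Pi.sub_apply, Pi.smul_apply])
    have hnc' : hammingNorm c' = ∑ i : Fin n, (if c' i ≠ 0 then 1 else 0) := by
      rw [hammingNorm, Finset.card_filter]
    have hnc : hammingNorm c = ∑ i : Fin n, (if c i ≠ 0 then 1 else 0) := by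
      rw [hammingNorm, Finset.card_filter]
    rw [hnc', hnc, Finset.mul_sum]
    simp only [hnorm]
    rw [Finset.sum_comm, ← Finset.sum_add_distrib]
    refine Finset.sum_congr rfl (fun i _ => ?_)
    rw [← key i, Finset.card_filter]
  -- lower bound each term of the sum
  have hterm : ∀ a ∈ univ.erase (0 : F), wmin ≤ hammingNorm (c - a • c') := by
    intro a _
    have hmem : c - a • c' ∈ C := C.sub_mem hc (C.smul_mem a hc')
    have hne : c - a • c' ≠ 0 := by
      intro hzero
      have := congrFun hzero i0
      simp [Pi.sub_apply, Pi.smul_apply, hi0c'] at this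
      exact hi0c this
    exact hwmin.2 ⟨c - a • c', hmem, hne, rfl⟩
  have hcarderase : (univ.erase (0 : F)).card = q - 1 := by
    rw [Finset.card_erase_of_mem (Finset.mem_univ _)]; rfl
  have hsumlb : (q - 1) * wmin ≤ ∑ a ∈ univ.erase (0 : F), hammingNorm (c - a • c') := by
    calc (q - 1) * wmin = (univ.erase (0 : F)).card * wmin := by rw [hcarderase]
    _ ≤ _ := Finset.card_nsmul_le_sum _ _ _ hterm
  have hc'lb : wmin ≤ hammingNorm c' := hwmin.2 ⟨c', hc', hc'0, rfl⟩
  have hcub : hammingNorm c ≤ wmax := hwmax.2 ⟨c, hc, hc0, rfl⟩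
  have hfinal : q * wmin ≤ (q - 1) * wmax := by
    have h1 : (q - 1) * wmin + wmin ≤ (q - 1) * hammingNorm c := by
      rw [← hsum]; exact Nat.add_le_add hsumlb hc'lb
    have h2 : (q - 1) * hammingNorm c ≤ (q - 1) * wmax :=
      Nat.mul_le_mul_left _ hcub
    have h3 : q * wmin = (q - 1) * wmin + wmin := by
      obtain ⟨m, hm⟩ : ∃ m, q = m + 1 := ⟨q - 1, by omega⟩
      rw [hm, Nat.add_sub_cancel, add_mul, one_mul]
    omega
  omega
end

section
/- Let r be an even integer with r ≤ m such that either r ≥ 6, or r = 4 and q ≥ 5. Let Q : F_q^m → F_q be the Type I quadratic form Q(x) = B_r(x) and let a ∈ F_q be nonzero. Then all nonzero codewords of the code C are minimal: for any nonzero b, b' ∈ F_q^m, the set {x ∈ F_q^m : Q(x) = a and L_{b'}(x) ≠ 0} is not a proper subset of the set {x ∈ F_q^m : Q(x) = a and L_b(x) ≠ 0}. -/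
open Finset

section Infra
variable {F : Type*} [Field F] [Fintype F] [DecidableEq F] {m n : ℕ}

lemma lfun_update (b y : Fin m → F) (p : Fin m) (s : F) :
    Lfun b (Function.update y p s) = Lfun b y + b p * (s - y p) := by
  unfold Lfun
  have h : ∀ k, b k * (Function.update y p s) k
      = b k * y k + (if k = p then b p * (s - y p) else 0) := by
    intro k
    by_cases hk : k = p
    · subst hk; simp; ring
    · simp [Function.update_of_ne hk, hk]
  simp only [h, Finset.sum_add_distrib, Finset.sum_ite_eq' Finset.univ p, Finset.mem_univ,
    if_true]

lemma lfun_decomp (c : F) (b b' x : Fin m → F) :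
    Lfun b' x = c * Lfun b x + Lfun (fun k => b' k - c * b k) x := by
  unfold Lfun
  rw [Finset.mul_sum, ← Finset.sum_add_distrib]
  apply Finset.sum_congr rfl
  intros; ring

lemma lfun_if2 (b : Fin m → F) (p1 p2 : Fin m) (h12 : p1 ≠ p2) (v1 v2 : F) :
    Lfun b (fun k => if k = p1 then v1 else if k = p2 then v2 else 0)
      = b p1 * v1 + b p2 * v2 := by
  unfold Lfun
  rw [← Finset.sum_subset (Finset.subset_univ ({p1, p2} : Finset (Fin m)))]
  · rw [Finset.sum_insert (by simp [h12]), Finset.sum_singleton]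
    simp [h12, h12.symm]
  · intro k _ hk
    simp only [Finset.mem_insert, Finset.mem_singleton, not_or] at hk
    simp [hk.1, hk.2]

lemma lfun_if3 (b : Fin m → F) (p1 p2 p3 : Fin m) (h12 : p1 ≠ p2) (h13 : p1 ≠ p3)
    (h23 : p2 ≠ p3) (v1 v2 v3 : F) :
    Lfun b (fun k => if k = p1 then v1 else if k = p2 then v2 else if k = p3 then v3 else 0)
      = b p1 * v1 + b p2 * v2 + b p3 * v3 := by
  unfold Lfun
  rw [← Finset.sum_subset (Finset.subset_univ ({p1, p2, p3} : Finset (Fin m)))]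
  · rw [Finset.sum_insert (by simp [h12, h13]), Finset.sum_insert (by simp [h23]),
      Finset.sum_singleton]
    simp [h12, h13, h23, h12.symm, h13.symm, h23.symm]
    ring
  · intro k _ hk
    simp only [Finset.mem_insert, Finset.mem_singleton, not_or] at hk
    simp [hk.1, hk.2.1, hk.2.2]

lemma lfun_if4 (b : Fin m → F) (p1 p2 p3 p4 : Fin m) (h12 : p1 ≠ p2) (h13 : p1 ≠ p3)
    (h14 : p1 ≠ p4) (h23 : p2 ≠ p3) (h24 : p2 ≠ p4) (h34 : p3 ≠ p4) (v1 v2 v3 v4 : F) :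
    Lfun b (fun k => if k = p1 then v1 else if k = p2 then v2 else if k = p3 then v3
        else if k = p4 then v4 else 0)
      = b p1 * v1 + b p2 * v2 + b p3 * v3 + b p4 * v4 := by
  unfold Lfun
  rw [← Finset.sum_subset (Finset.subset_univ ({p1, p2, p3, p4} : Finset (Fin m)))]
  · rw [Finset.sum_insert (by simp [h12, h13, h14]), Finset.sum_insert (by simp [h23, h24]),
      Finset.sum_insert (by simp [h34]), Finset.sum_singleton]
    simp [h12, h13, h14, h23, h24, h34, h12.symm, h13.symm, h14.symm, h23.symm, h24.symm,
      h34.symm]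
    ring
  · intro k _ hk
    simp only [Finset.mem_insert, Finset.mem_singleton, not_or] at hk
    simp [hk.1, hk.2.1, hk.2.2.1, hk.2.2.2]

lemma bform_support (hn : 2*n ≤ m) (x : Fin m → F) (J : Finset ℕ) (hJ : J ⊆ Finset.range n)
    (hx : ∀ i (hi : i < n) (_ : i ∉ J), x ⟨2*i, by omega⟩ = 0 ∨ x ⟨2*i+1, by omega⟩ = 0) :
    Bform n x = ∑ i ∈ J,
      if h : 2*i+1 < m then x ⟨2*i, by omega⟩ * x ⟨2*i+1, h⟩ else 0 := by
  unfold Bform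
  rw [Finset.sum_subset hJ]
  intro i hi hni
  have hi' := Finset.mem_range.mp hi
  rw [dif_pos (by omega)]
  rcases hx i hi' hni with h | h
  · rw [h, zero_mul]
  · rw [h, mul_zero]

lemma bform_update_pair (hn : 2*n ≤ m) (y : Fin m → F) (i : ℕ) (hi : i < n)
    (hpt : y ⟨2*i+1, by omega⟩ = 0) (s : F) :
    Bform n (Function.update y ⟨2*i, by omega⟩ s) = Bform n y := by
  unfold Bform
  apply Finset.sum_congr rfl
  intro t ht
  have ht' := Finset.mem_range.mp ht
  rw [dif_pos (by omega), dif_pos (by omega)]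
  by_cases hti : t = i
  · subst hti
    simp only [Function.update_apply, Fin.mk.injEq]
    rw [if_pos trivial, if_neg (show ¬(2*t+1 = 2*t) by omega), hpt, mul_zero, mul_zero]
  · simp only [Function.update_apply, Fin.mk.injEq]
    rw [if_neg (show ¬(2*t = 2*i) by omega), if_neg (show ¬(2*t+1 = 2*i) by omega)]

lemma bform_update_tail (hn : 2*n ≤ m) (y : Fin m → F) (p : Fin m) (hp : 2*n ≤ p.val)
    (s : F) :
    Bform n (Function.update y p s) = Bform n y := by
  unfold Bform
  apply Finset.sum_congr rfl
  intro t ht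
  have ht' := Finset.mem_range.mp ht
  rw [dif_pos (by omega), dif_pos (by omega)]
  simp only [Function.update_apply]
  rw [if_neg (Fin.ne_of_val_ne (show (2*t : ℕ) ≠ p.val by omega)),
    if_neg (Fin.ne_of_val_ne (show (2*t+1 : ℕ) ≠ p.val by omega))]

lemma exists_sq_ne (h5 : 5 ≤ Fintype.card F) (w : F) : ∃ s : F, s ≠ 0 ∧ s^2 ≠ w := by
  by_cases hw : ∃ s₀ : F, s₀^2 = w
  · obtain ⟨s₀, hs₀⟩ := hw
    have hcard : ({0, s₀, -s₀} : Finset F).card ≤ 3 := by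
      apply le_trans (Finset.card_insert_le _ _)
      have := Finset.card_insert_le s₀ ({-s₀} : Finset F)
      simp at this ⊢
      omega
    have hne : ({0, s₀, -s₀} : Finset F) ≠ Finset.univ := by
      intro h
      rw [← Finset.card_univ, ← h] at h5
      omega
    have hne' : ¬ ∀ x : F, x ∈ ({0, s₀, -s₀} : Finset F) :=
      fun h => hne (Finset.eq_univ_iff_forall.mpr h)
    push_neg at hne'
    obtain ⟨s, hs⟩ := hne'
    simp only [Finset.mem_insert, Finset.mem_singleton, not_or] at hs
    refine ⟨s, hs.1, ?_⟩
    intro hsq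
    have hz : (s - s₀) * (s + s₀) = 0 := by
      have h' : s^2 - s₀^2 = 0 := by rw [hsq, hs₀, sub_self]
      linear_combination h'
    rcases mul_eq_zero.mp hz with h | h
    · exact hs.2.1 (sub_eq_zero.mp h)
    · exact hs.2.2 (eq_neg_of_add_eq_zero_left h)
  · push_neg at hw
    exact ⟨1, one_ne_zero, hw 1⟩


lemma lemB3 (hn : 2*n ≤ m) (a : F) (ha : a ≠ 0) (h5 : 5 ≤ Fintype.card F)
    (M : Fin m → F) (j : ℕ) (hj : j < n)
    (hμν : M ⟨2*j, by omega⟩ ≠ 0 ∨ M ⟨2*j+1, by omega⟩ ≠ 0) :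
    ∃ y : Fin m → F, Bform n y = a ∧ Lfun M y ≠ 0 ∧
      ∀ k : Fin m, k ≠ ⟨2*j, by omega⟩ → k ≠ ⟨2*j+1, by omega⟩ → y k = 0 := by
  have hj1 : 2*j < m := by omega
  have hj2 : 2*j+1 < m := by omega
  set μ := M ⟨2*j, hj1⟩ with hμdef
  set ν := M ⟨2*j+1, hj2⟩ with hνdef
  obtain ⟨s, hs, hval⟩ : ∃ s : F, s ≠ 0 ∧ μ*s^2 + ν*a ≠ 0 := by
    by_cases hμ : μ = 0
    · refine ⟨1, one_ne_zero, ?_⟩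
      have hν : ν ≠ 0 := by tauto
      simp [hμ, hν, ha]
    · obtain ⟨s, hs, hsq⟩ := exists_sq_ne (F := F) h5 (-(ν*a)/μ)
      refine ⟨s, hs, fun h => hsq ?_⟩
      field_simp
      linear_combination h
  refine ⟨fun k => if k = ⟨2*j, hj1⟩ then s else if k = ⟨2*j+1, hj2⟩ then a/s else 0,
    ?_, ?_, ?_⟩
  · rw [bform_support hn _ {j} (by simp [Finset.mem_range, hj])]
    · rw [Finset.sum_singleton, dif_pos hj2]
      rw [if_pos rfl, if_neg (Fin.ne_of_val_ne (show 2*j+1 ≠ 2*j by omega)), if_pos rfl]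
      field_simp
    · intro i hi hij
      simp only [Finset.mem_singleton] at hij
      left
      simp only [Fin.mk.injEq]
      rw [if_neg (by omega : ¬(2*i = 2*j)), if_neg (by omega : ¬(2*i = 2*j+1))]
  · rw [lfun_if2 M _ _ (Fin.ne_of_val_ne (show 2*j ≠ 2*j+1 by omega))]
    intro h
    apply hval
    have hexp : μ*s^2 + ν*a = (M ⟨2*j, hj1⟩ * s + M ⟨2*j+1, hj2⟩ * (a/s))*s := by
      field_simp
      ring
    rw [hexp, h, zero_mul]
  · intro k hk1 hk2
    simp only [if_neg hk1, if_neg hk2]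

lemma lemB1 (hn : 2*n ≤ m) (a : F) (M : Fin m → F) (j : ℕ) (hj : j < n)
    (l : Fin m) (hl : 2*n ≤ l.val) (hMl : M l ≠ 0) :
    ∃ y : Fin m → F, Bform n y = a ∧ Lfun M y ≠ 0 ∧
      ∀ k : Fin m, k ≠ ⟨2*j, by omega⟩ → k ≠ ⟨2*j+1, by omega⟩ → k ≠ l → y k = 0 := by
  have hj1 : 2*j < m := by omega
  have hj2 : 2*j+1 < m := by omega
  set s := (1 - M ⟨2*j, hj1⟩ - M ⟨2*j+1, hj2⟩ * a)/(M l) with hsdef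
  have ne1 : (⟨2*j, hj1⟩ : Fin m) ≠ ⟨2*j+1, hj2⟩ :=
    Fin.ne_of_val_ne (show 2*j ≠ 2*j+1 by omega)
  have ne2 : (⟨2*j, hj1⟩ : Fin m) ≠ l := Fin.ne_of_val_ne (show 2*j ≠ l.val by omega)
  have ne3 : (⟨2*j+1, hj2⟩ : Fin m) ≠ l := Fin.ne_of_val_ne (show 2*j+1 ≠ l.val by omega)
  refine ⟨fun k => if k = ⟨2*j, hj1⟩ then 1 else if k = ⟨2*j+1, hj2⟩ then a
      else if k = l then s else 0, ?_, ?_, ?_⟩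
  · rw [bform_support hn _ {j} (by simp [Finset.mem_range, hj])]
    · rw [Finset.sum_singleton, dif_pos hj2]
      rw [if_pos rfl, if_neg (Fin.ne_of_val_ne (show 2*j+1 ≠ 2*j by omega)), if_pos rfl,
        one_mul]
    · intro i hi hij
      simp only [Finset.mem_singleton] at hij
      left
      simp only [Fin.ext_iff, Fin.val_mk]
      rw [if_neg (by omega : ¬(2*i = 2*j)), if_neg (by omega : ¬(2*i = 2*j+1)),
        if_neg (by omega : ¬(2*i = l.val))]
  · rw [lfun_if3 M _ _ _ ne1 ne2 ne3]
    have : M ⟨2*j, hj1⟩ * 1 + M ⟨2*j+1, hj2⟩ * a + M l * s = 1 := by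
      rw [hsdef]
      field_simp
      ring
    rw [this]
    exact one_ne_zero
  · intro k hk1 hk2 hk3
    simp only [if_neg hk1, if_neg hk2, if_neg hk3]

lemma lemB2 (hn : 2*n ≤ m) (a : F) (ha : a ≠ 0) (M : Fin m → F) (j l : ℕ)
    (hj : j < n) (hl : l < n) (hjl : j ≠ l)
    (hμν : M ⟨2*j, by omega⟩ ≠ 0 ∨ M ⟨2*j+1, by omega⟩ ≠ 0) :
    ∃ y : Fin m → F, Bform n y = a ∧ Lfun M y ≠ 0 ∧
      ∀ k : Fin m, k ≠ ⟨2*j, by omega⟩ → k ≠ ⟨2*j+1, by omega⟩ →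
        k ≠ ⟨2*l, by omega⟩ → k ≠ ⟨2*l+1, by omega⟩ → y k = 0 := by
  have hj1 : 2*j < m := by omega
  have hj2 : 2*j+1 < m := by omega
  have hl1 : 2*l < m := by omega
  have hl2 : 2*l+1 < m := by omega
  have ne12 : (⟨2*j, hj1⟩ : Fin m) ≠ ⟨2*j+1, hj2⟩ :=
    Fin.ne_of_val_ne (show 2*j ≠ 2*j+1 by omega)
  have ne13 : (⟨2*j, hj1⟩ : Fin m) ≠ ⟨2*l, hl1⟩ :=
    Fin.ne_of_val_ne (show 2*j ≠ 2*l by omega)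
  have ne14 : (⟨2*j, hj1⟩ : Fin m) ≠ ⟨2*l+1, hl2⟩ :=
    Fin.ne_of_val_ne (show 2*j ≠ 2*l+1 by omega)
  have ne23 : (⟨2*j+1, hj2⟩ : Fin m) ≠ ⟨2*l, hl1⟩ :=
    Fin.ne_of_val_ne (show 2*j+1 ≠ 2*l by omega)
  have ne24 : (⟨2*j+1, hj2⟩ : Fin m) ≠ ⟨2*l+1, hl2⟩ :=
    Fin.ne_of_val_ne (show 2*j+1 ≠ 2*l+1 by omega)
  have ne34 : (⟨2*l, hl1⟩ : Fin m) ≠ ⟨2*l+1, hl2⟩ :=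
    Fin.ne_of_val_ne (show 2*l ≠ 2*l+1 by omega)
  have aux : ∀ w1 w2 : F, w1 * w2 = 0 →
      Bform n (fun k => if k = ⟨2*j, hj1⟩ then w1 else if k = ⟨2*j+1, hj2⟩ then w2
        else if k = ⟨2*l, hl1⟩ then 1 else if k = ⟨2*l+1, hl2⟩ then a else 0) = a ∧
      Lfun M (fun k => if k = ⟨2*j, hj1⟩ then w1 else if k = ⟨2*j+1, hj2⟩ then w2
        else if k = ⟨2*l, hl1⟩ then 1 else if k = ⟨2*l+1, hl2⟩ then a else 0)
        = M ⟨2*j, hj1⟩ * w1 + M ⟨2*j+1, hj2⟩ * w2 + (M ⟨2*l, hl1⟩ + M ⟨2*l+1, hl2⟩ * a) ∧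
      (∀ k : Fin m, k ≠ ⟨2*j, hj1⟩ → k ≠ ⟨2*j+1, hj2⟩ →
        k ≠ ⟨2*l, hl1⟩ → k ≠ ⟨2*l+1, hl2⟩ →
        (fun k => if k = ⟨2*j, hj1⟩ then w1 else if k = ⟨2*j+1, hj2⟩ then w2
        else if k = ⟨2*l, hl1⟩ then 1 else if k = ⟨2*l+1, hl2⟩ then a else 0) k = 0) := by
    intro w1 w2 hw
    refine ⟨?_, ?_, ?_⟩
    · rw [bform_support hn _ {j, l} (by
        intro t ht
        simp only [Finset.mem_insert, Finset.mem_singleton] at ht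
        rcases ht with h | h <;> simp [h, Finset.mem_range, hj, hl])]
      · rw [Finset.sum_pair hjl, dif_pos hj2, dif_pos hl2]
        rw [if_pos rfl, if_neg ne12.symm, if_pos rfl, if_neg ne13.symm,
          if_neg ne23.symm, if_pos rfl, if_neg ne14.symm, if_neg ne24.symm,
          if_neg ne34.symm, if_pos rfl]
        rw [hw, zero_add, one_mul]
      · intro i hi hiJ
        simp only [Finset.mem_insert, Finset.mem_singleton, not_or] at hiJ
        left
        simp only [Fin.mk.injEq]
        rw [if_neg (by omega : ¬(2*i = 2*j)), if_neg (by omega : ¬(2*i = 2*j+1)),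
          if_neg (by omega : ¬(2*i = 2*l)), if_neg (by omega : ¬(2*i = 2*l+1))]
    · rw [lfun_if4 M _ _ _ _ ne12 ne13 ne14 ne23 ne24 ne34]
      ring
    · intro k hk1 hk2 hk3 hk4
      simp only [if_neg hk1, if_neg hk2, if_neg hk3, if_neg hk4]
  by_cases h4 : M ⟨2*l, hl1⟩ + M ⟨2*l+1, hl2⟩ * a ≠ 0
  · obtain ⟨h1, h2, h3⟩ := aux 0 0 (by ring)
    refine ⟨_, h1, ?_, h3⟩
    rw [h2]
    simpa using h4
  · push_neg at h4
    by_cases hμ : M ⟨2*j, hj1⟩ ≠ 0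
    · obtain ⟨h1, h2, h3⟩ := aux 1 0 (by ring)
      refine ⟨_, h1, ?_, h3⟩
      rw [h2, h4]
      simpa using hμ
    · push_neg at hμ
      have hν : M ⟨2*j+1, hj2⟩ ≠ 0 := by tauto
      obtain ⟨h1, h2, h3⟩ := aux 0 1 (by ring)
      refine ⟨_, h1, ?_, h3⟩
      rw [h2, h4]
      simpa using hν


lemma lemHpair (hn : 2*n ≤ m) (hn2 : 2 ≤ n) (a : F) (ha : a ≠ 0)
    (hq : 3 ≤ n ∨ 5 ≤ Fintype.card F) (M : Fin m → F) (i : ℕ) (hi : i < n)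
    (k0 : Fin m) (hk1 : k0.val ≠ 2*i) (hk2 : k0.val ≠ 2*i+1) (hMk : M k0 ≠ 0) :
    ∃ y : Fin m → F, Bform n y = a ∧ Lfun M y ≠ 0 ∧
      y ⟨2*i, by omega⟩ = 0 ∧ y ⟨2*i+1, by omega⟩ = 0 := by
  by_cases ht : 2*n ≤ k0.val
  · obtain ⟨j, hjn, hji⟩ : ∃ j, j < n ∧ j ≠ i :=
      ⟨if i = 0 then 1 else 0, by split_ifs <;> omega, by split_ifs <;> omega⟩
    obtain ⟨y, hB, hL, hsupp⟩ := lemB1 hn a M j hjn k0 ht hMk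
    exact ⟨y, hB, hL,
      hsupp _ (Fin.ne_of_val_ne (show 2*i ≠ 2*j by omega))
        (Fin.ne_of_val_ne (show 2*i ≠ 2*j+1 by omega))
        (Fin.ne_of_val_ne (show 2*i ≠ k0.val by omega)),
      hsupp _ (Fin.ne_of_val_ne (show 2*i+1 ≠ 2*j by omega))
        (Fin.ne_of_val_ne (show 2*i+1 ≠ 2*j+1 by omega))
        (Fin.ne_of_val_ne (show 2*i+1 ≠ k0.val by omega))⟩
  · push_neg at ht
    have hj0def : k0.val / 2 = k0.val / 2 := rfl
    set j0 := k0.val / 2 with hj0s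
    have hj0 : j0 < n := by omega
    have h2j0 : 2*j0 = k0.val ∨ 2*j0+1 = k0.val := by omega
    have hj0i : j0 ≠ i := by omega
    have hμν : M ⟨2*j0, by omega⟩ ≠ 0 ∨ M ⟨2*j0+1, by omega⟩ ≠ 0 := by
      rcases h2j0 with h | h
      · left
        have hk : (⟨2*j0, by omega⟩ : Fin m) = k0 := Fin.ext h
        rw [hk]; exact hMk
      · right
        have hk : (⟨2*j0+1, by omega⟩ : Fin m) = k0 := Fin.ext h
        rw [hk]; exact hMk
    by_cases h3 : 3 ≤ n
    · obtain ⟨l, hln, hli, hlj⟩ : ∃ l, l < n ∧ l ≠ i ∧ l ≠ j0 := by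
        refine ⟨if i ≠ 0 ∧ j0 ≠ 0 then 0 else if i ≠ 1 ∧ j0 ≠ 1 then 1 else 2, ?_, ?_, ?_⟩ <;>
          (split_ifs <;> omega)
      obtain ⟨y, hB, hL, hsupp⟩ := lemB2 hn a ha M j0 l hj0 hln (fun h => hlj h.symm) hμν
      exact ⟨y, hB, hL,
        hsupp _ (Fin.ne_of_val_ne (show 2*i ≠ 2*j0 by omega))
          (Fin.ne_of_val_ne (show 2*i ≠ 2*j0+1 by omega))
          (Fin.ne_of_val_ne (show 2*i ≠ 2*l by omega))
          (Fin.ne_of_val_ne (show 2*i ≠ 2*l+1 by omega)),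
        hsupp _ (Fin.ne_of_val_ne (show 2*i+1 ≠ 2*j0 by omega))
          (Fin.ne_of_val_ne (show 2*i+1 ≠ 2*j0+1 by omega))
          (Fin.ne_of_val_ne (show 2*i+1 ≠ 2*l by omega))
          (Fin.ne_of_val_ne (show 2*i+1 ≠ 2*l+1 by omega))⟩
    · have h5 : 5 ≤ Fintype.card F := hq.resolve_left h3
      obtain ⟨y, hB, hL, hsupp⟩ := lemB3 hn a ha h5 M j0 hj0 hμν
      exact ⟨y, hB, hL,
        hsupp _ (Fin.ne_of_val_ne (show 2*i ≠ 2*j0 by omega))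
          (Fin.ne_of_val_ne (show 2*i ≠ 2*j0+1 by omega)),
        hsupp _ (Fin.ne_of_val_ne (show 2*i+1 ≠ 2*j0 by omega))
          (Fin.ne_of_val_ne (show 2*i+1 ≠ 2*j0+1 by omega))⟩

lemma lemHtail (hn : 2*n ≤ m) (hn2 : 2 ≤ n) (a : F) (ha : a ≠ 0)
    (M : Fin m → F) (k0 : Fin m) (hk0 : 2*n ≤ k0.val)
    (l : Fin m) (hlk : l ≠ k0) (hMl : M l ≠ 0) :
    ∃ y : Fin m → F, Bform n y = a ∧ Lfun M y ≠ 0 ∧ y k0 = 0 := by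
  by_cases ht : 2*n ≤ l.val
  · obtain ⟨y, hB, hL, hsupp⟩ := lemB1 hn a M 0 (by omega) l ht hMl
    exact ⟨y, hB, hL,
      hsupp _ (Fin.ne_of_val_ne (show k0.val ≠ 2*0 by omega))
        (Fin.ne_of_val_ne (show k0.val ≠ 2*0+1 by omega)) hlk.symm⟩
  · push_neg at ht
    set j0 := l.val / 2 with hj0s
    have hj0 : j0 < n := by omega
    have h2j0 : 2*j0 = l.val ∨ 2*j0+1 = l.val := by omega
    have hμν : M ⟨2*j0, by omega⟩ ≠ 0 ∨ M ⟨2*j0+1, by omega⟩ ≠ 0 := by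
      rcases h2j0 with h | h
      · left
        have hk : (⟨2*j0, by omega⟩ : Fin m) = l := Fin.ext h
        rw [hk]; exact hMl
      · right
        have hk : (⟨2*j0+1, by omega⟩ : Fin m) = l := Fin.ext h
        rw [hk]; exact hMl
    obtain ⟨j1, hj1n, hj1⟩ : ∃ j1, j1 < n ∧ j0 ≠ j1 :=
      ⟨if j0 = 0 then 1 else 0, by split_ifs <;> omega, by split_ifs <;> omega⟩
    obtain ⟨y, hB, hL, hsupp⟩ := lemB2 hn a ha M j0 j1 hj0 hj1n hj1 hμν
    exact ⟨y, hB, hL,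
      hsupp _ (Fin.ne_of_val_ne (show k0.val ≠ 2*j0 by omega))
        (Fin.ne_of_val_ne (show k0.val ≠ 2*j0+1 by omega))
        (Fin.ne_of_val_ne (show k0.val ≠ 2*j1 by omega))
        (Fin.ne_of_val_ne (show k0.val ≠ 2*j1+1 by omega))⟩


def sgv (n v : ℕ) : ℕ := if v < 2*n then (if v % 2 = 0 then v + 1 else v - 1) else v

lemma sgv_lt {n v m : ℕ} (hn : 2*n ≤ m) (hv : v < m) : sgv n v < m := by
  unfold sgv; split_ifs <;> omega

def sg (n : ℕ) {m : ℕ} (hn : 2*n ≤ m) (k : Fin m) : Fin m := ⟨sgv n k.val, sgv_lt hn k.2⟩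

lemma sgv_invol (n v : ℕ) : sgv n (sgv n v) = v := by
  unfold sgv; split_ifs <;> omega

lemma sg_invol {n : ℕ} (hn : 2*n ≤ m) : ∀ k, sg n hn (sg n hn k) = k :=
  fun k => Fin.ext (sgv_invol n k.val)

lemma sg_even {n : ℕ} (hn : 2*n ≤ m) (t : ℕ) (ht : t < n) :
    sg n hn ⟨2*t, by omega⟩ = ⟨2*t+1, by omega⟩ := by
  apply Fin.ext
  show sgv n (2*t) = 2*t+1
  unfold sgv; split_ifs <;> omega

lemma sg_odd {n : ℕ} (hn : 2*n ≤ m) (t : ℕ) (ht : t < n) :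
    sg n hn ⟨2*t+1, by omega⟩ = ⟨2*t, by omega⟩ := by
  apply Fin.ext
  show sgv n (2*t+1) = 2*t
  unfold sgv; split_ifs <;> omega

lemma lfun_sg {n : ℕ} (hn : 2*n ≤ m) (b x : Fin m → F) :
    Lfun b (fun k => x (sg n hn k)) = Lfun (fun k => b (sg n hn k)) x := by
  unfold Lfun
  rw [← Equiv.sum_comp (⟨sg n hn, sg n hn, sg_invol hn, sg_invol hn⟩ : Fin m ≃ Fin m)
    (fun k => b (sg n hn k) * x k)]
  apply Finset.sum_congr rfl
  intro k _
  simp only [Equiv.coe_fn_mk]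
  rw [sg_invol]

lemma bform_sg {n : ℕ} (hn : 2*n ≤ m) (x : Fin m → F) :
    Bform n (fun k => x (sg n hn k)) = Bform n x := by
  unfold Bform
  apply Finset.sum_congr rfl
  intro t ht
  have ht' := Finset.mem_range.mp ht
  rw [dif_pos (by omega), dif_pos (by omega)]
  show x (sg n hn ⟨2*t, by omega⟩) * x (sg n hn ⟨2*t+1, by omega⟩) = _
  rw [sg_even hn t ht', sg_odd hn t ht']
  ring

lemma mainE (hn : 2*n ≤ m) (hn2 : 2 ≤ n) (hq : 3 ≤ n ∨ 5 ≤ Fintype.card F)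
    (a : F) (ha : a ≠ 0) (b b' : Fin m → F) (i : ℕ) (hi : i < n)
    (hbe : b ⟨2*i, by omega⟩ ≠ 0)
    (hind : ∀ c : F, ∃ k, b' k ≠ c * b k) :
    ∃ x, Bform n x = a ∧ Lfun b x = 0 ∧ Lfun b' x ≠ 0 := by
  have hp1 : 2*i < m := by omega
  have hp2 : 2*i+1 < m := by omega
  have hbe' : b ⟨2*i, hp1⟩ ≠ 0 := hbe
  set c := b' ⟨2*i, hp1⟩ / b ⟨2*i, hp1⟩ with hcdef
  set M : Fin m → F := fun k => b' k - c * b k with hMdef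
  have hdec : ∀ x, Lfun b' x = c * Lfun b x + Lfun M x := fun x => lfun_decomp c b b' x
  have hMp1 : M ⟨2*i, hp1⟩ = 0 := by
    simp only [hMdef, hcdef]
    field_simp
    ring
  by_cases hoff : ∃ k : Fin m, k.val ≠ 2*i ∧ k.val ≠ 2*i+1 ∧ M k ≠ 0
  · obtain ⟨k0, hk1, hk2, hMk⟩ := hoff
    obtain ⟨y, hB, hL, hy1, hy2⟩ := lemHpair hn hn2 a ha hq M i hi k0 hk1 hk2 hMk
    set s := -(Lfun b y)/(b ⟨2*i, hp1⟩) with hsdef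
    have hLx : Lfun b (Function.update y ⟨2*i, hp1⟩ s) = 0 := by
      rw [lfun_update, hy1, hsdef]
      field_simp
      ring
    refine ⟨Function.update y ⟨2*i, hp1⟩ s, ?_, hLx, ?_⟩
    · rw [bform_update_pair hn y i hi hy2 s]
      exact hB
    · rw [hdec, hLx, lfun_update, hMp1, hy1]
      simpa using hL
  · push_neg at hoff
    have hδ : M ⟨2*i+1, hp2⟩ ≠ 0 := by
      intro h0
      obtain ⟨k, hk⟩ := hind c
      apply hk
      have hM0 : M k = 0 := by
        by_cases e2 : k.val = 2*i
        · have hek : k = ⟨2*i, hp1⟩ := Fin.ext e2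
          rw [hek]; exact hMp1
        · by_cases e1 : k.val = 2*i+1
          · have hek : k = ⟨2*i+1, hp2⟩ := Fin.ext e1
            rw [hek]; exact h0
          · exact hoff k e2 e1
      have hM0' : b' k - c * b k = 0 := by simpa [hMdef] using hM0
      exact sub_eq_zero.mp hM0'
    obtain ⟨j, hjn, hji⟩ : ∃ j, j < n ∧ j ≠ i :=
      ⟨if i = 0 then 1 else 0, by split_ifs <;> omega, by split_ifs <;> omega⟩
    have hq1 : 2*j < m := by omega
    have hq2 : 2*j+1 < m := by omega
    set u := b ⟨2*j+1, hq2⟩ / b ⟨2*i, hp1⟩ + 1 with hudef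
    set z := (b ⟨2*i, hp1⟩ * a + b ⟨2*i+1, hp2⟩ + b ⟨2*j, hq1⟩ * u) / b ⟨2*i, hp1⟩ with hzdef
    set t := a - u * z with htdef
    have mA : (⟨2*i, hp1⟩ : Fin m) ≠ ⟨2*i+1, hp2⟩ :=
      Fin.ne_of_val_ne (show 2*i ≠ 2*i+1 by omega)
    have mB : (⟨2*i, hp1⟩ : Fin m) ≠ ⟨2*j, hq1⟩ :=
      Fin.ne_of_val_ne (show 2*i ≠ 2*j by omega)
    have mC : (⟨2*i, hp1⟩ : Fin m) ≠ ⟨2*j+1, hq2⟩ :=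
      Fin.ne_of_val_ne (show 2*i ≠ 2*j+1 by omega)
    have mD : (⟨2*i+1, hp2⟩ : Fin m) ≠ ⟨2*j, hq1⟩ :=
      Fin.ne_of_val_ne (show 2*i+1 ≠ 2*j by omega)
    have mE : (⟨2*i+1, hp2⟩ : Fin m) ≠ ⟨2*j+1, hq2⟩ :=
      Fin.ne_of_val_ne (show 2*i+1 ≠ 2*j+1 by omega)
    have mF : (⟨2*j, hq1⟩ : Fin m) ≠ ⟨2*j+1, hq2⟩ :=
      Fin.ne_of_val_ne (show 2*j ≠ 2*j+1 by omega)
    have hL0 : Lfun b (fun k => if k = ⟨2*i, hp1⟩ then t else if k = ⟨2*i+1, hp2⟩ then 1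
        else if k = ⟨2*j, hq1⟩ then u else if k = ⟨2*j+1, hq2⟩ then z else 0) = 0 := by
      rw [lfun_if4 b _ _ _ _ mA mB mC mD mE mF]
      rw [htdef, hzdef, hudef]
      field_simp
      ring
    refine ⟨_, ?_, hL0, ?_⟩
    · rw [bform_support hn _ {i, j} (by
        intro w hw
        simp only [Finset.mem_insert, Finset.mem_singleton] at hw
        rcases hw with h | h <;> simp [h, Finset.mem_range, hi, hjn])]
      · rw [Finset.sum_pair hji.symm, dif_pos hp2, dif_pos hq2]
        rw [if_pos rfl, if_neg mA.symm, if_pos rfl, if_neg mB.symm, if_neg mD.symm,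
          if_pos rfl, if_neg mC.symm, if_neg mE.symm, if_neg mF.symm, if_pos rfl]
        rw [htdef]; ring
      · intro w hw hwJ
        simp only [Finset.mem_insert, Finset.mem_singleton, not_or] at hwJ
        left
        simp only [Fin.mk.injEq]
        rw [if_neg (by omega : ¬(2*w = 2*i)), if_neg (by omega : ¬(2*w = 2*i+1)),
          if_neg (by omega : ¬(2*w = 2*j)), if_neg (by omega : ¬(2*w = 2*j+1))]
    · rw [hdec, hL0, lfun_if4 M _ _ _ _ mA mB mC mD mE mF, hMp1]
      have hMq1 : M ⟨2*j, hq1⟩ = 0 :=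
        hoff _ (show 2*j ≠ 2*i by omega) (show 2*j ≠ 2*i+1 by omega)
      have hMq2 : M ⟨2*j+1, hq2⟩ = 0 :=
        hoff _ (show 2*j+1 ≠ 2*i by omega) (show 2*j+1 ≠ 2*i+1 by omega)
      rw [hMq1, hMq2]
      simpa using hδ

lemma mainT (hn : 2*n ≤ m) (hn2 : 2 ≤ n) (a : F) (ha : a ≠ 0) (b b' : Fin m → F)
    (k0 : Fin m) (hk0 : 2*n ≤ k0.val) (hbk : b k0 ≠ 0)
    (hind : ∀ c : F, ∃ k, b' k ≠ c * b k) :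
    ∃ x, Bform n x = a ∧ Lfun b x = 0 ∧ Lfun b' x ≠ 0 := by
  set c := b' k0 / b k0 with hcdef
  set M : Fin m → F := fun k => b' k - c * b k with hMdef
  have hdec : ∀ x, Lfun b' x = c * Lfun b x + Lfun M x := fun x => lfun_decomp c b b' x
  have hMk0 : M k0 = 0 := by
    simp only [hMdef, hcdef]
    field_simp
    ring
  obtain ⟨l, hl⟩ := hind c
  have hMl : M l ≠ 0 := by
    intro h
    have h' : b' l - c * b l = 0 := by simpa [hMdef] using h
    have := sub_eq_zero.mp h'
    exact hl this
  have hlk : l ≠ k0 := fun h => hMl (h ▸ hMk0)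
  obtain ⟨y, hB, hL, hyk⟩ := lemHtail hn hn2 a ha M k0 hk0 l hlk hMl
  set s := -(Lfun b y)/(b k0) with hsdef
  have hLx : Lfun b (Function.update y k0 s) = 0 := by
    rw [lfun_update, hyk, hsdef]
    field_simp
    ring
  refine ⟨Function.update y k0 s, ?_, hLx, ?_⟩
  · rw [bform_update_tail hn y k0 hk0 s]
    exact hB
  · rw [hdec, hLx, lfun_update, hMk0, hyk]
    simpa using hL

lemma mainLem (hn : 2*n ≤ m) (hn2 : 2 ≤ n) (hq : 3 ≤ n ∨ 5 ≤ Fintype.card F)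
    (a : F) (ha : a ≠ 0) (b b' : Fin m → F) (hb : b ≠ 0)
    (hind : ∀ c : F, ∃ k, b' k ≠ c * b k) :
    ∃ x, Bform n x = a ∧ Lfun b x = 0 ∧ Lfun b' x ≠ 0 := by
  by_cases hE : ∃ k : Fin m, k.val < 2*n ∧ k.val % 2 = 0 ∧ b k ≠ 0
  · obtain ⟨k, hk1, hk2, hk3⟩ := hE
    have hi : k.val / 2 < n := by omega
    have hbe : b ⟨2*(k.val/2), by omega⟩ ≠ 0 := by
      have : (⟨2*(k.val/2), by omega⟩ : Fin m) = k :=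
        Fin.ext (show 2*(k.val/2) = k.val by omega)
      rw [this]; exact hk3
    exact mainE hn hn2 hq a ha b b' (k.val/2) hi hbe hind
  · by_cases hO : ∃ k : Fin m, k.val < 2*n ∧ k.val % 2 = 1 ∧ b k ≠ 0
    · obtain ⟨k, hk1, hk2, hk3⟩ := hO
      have hi : k.val / 2 < n := by omega
      have hbe : (fun w => b (sg n hn w)) ⟨2*(k.val/2), by omega⟩ ≠ 0 := by
        show b (sg n hn ⟨2*(k.val/2), by omega⟩) ≠ 0
        rw [sg_even hn _ hi]
        have : (⟨2*(k.val/2)+1, by omega⟩ : Fin m) = k :=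
          Fin.ext (show 2*(k.val/2)+1 = k.val by omega)
        rw [this]; exact hk3
      have hind' : ∀ c : F, ∃ w, (fun w => b' (sg n hn w)) w ≠ c * (fun w => b (sg n hn w)) w := by
        intro c
        obtain ⟨w, hw⟩ := hind c
        exact ⟨sg n hn w, by simpa [sg_invol hn w] using hw⟩
      obtain ⟨x, hB, hL, hL'⟩ := mainE hn hn2 hq a ha (fun w => b (sg n hn w))
        (fun w => b' (sg n hn w)) (k.val/2) hi hbe hind'
      refine ⟨fun w => x (sg n hn w), ?_, ?_, ?_⟩
      · rw [bform_sg hn x]; exact hB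
      · rw [lfun_sg hn b x]; exact hL
      · rw [lfun_sg hn b' x]; exact hL'
    · have hlow : ∀ k : Fin m, k.val < 2*n → b k = 0 := by
        intro k hk
        push_neg at hE hO
        by_cases hpar : k.val % 2 = 0
        · exact hE k hk hpar
        · exact hO k hk (by omega)
      obtain ⟨k0, hk0⟩ := Function.ne_iff.mp hb
      have hbk : b k0 ≠ 0 := by simpa using hk0
      have hk0t : 2*n ≤ k0.val := by
        by_contra hlt
        exact hbk (hlow k0 (by omega))
      exact mainT hn hn2 a ha b b' k0 hk0t hbk hind

end Infra

theorem statement16 (p e q m r : ℕ) (F : Type*) [Field F] [Fintype F] [DecidableEq F]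
    (hp : p.Prime) (hpodd : Odd p) (he : 0 < e) (hq : q = p ^ e)
    (hcard : Fintype.card F = q)
    (hreven : Even r) (hrm : r ≤ m)
    (hr : 6 ≤ r ∨ (r = 4 ∧ 5 ≤ q))
    (a : F) (ha : a ≠ 0) :
    ∀ b b' : Fin m → F, b ≠ 0 → b' ≠ 0 →
      ¬ ({x : Fin m → F | Bform (r / 2) x = a ∧ Lfun b' x ≠ 0}
          ⊂ {x : Fin m → F | Bform (r / 2) x = a ∧ Lfun b x ≠ 0}) := by
  intro b b' hb hb' hss
  obtain ⟨t, ht⟩ := hreven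
  have hrt : r / 2 = t := by omega
  rw [hrt] at hss
  have h4 : 4 ≤ r := by rcases hr with h | ⟨h, _⟩ <;> omega
  have hn : 2*t ≤ m := by omega
  have hn2 : 2 ≤ t := by omega
  have hq' : 3 ≤ t ∨ 5 ≤ Fintype.card F := by
    rcases hr with h6 | ⟨h4', h5⟩
    · left; omega
    · right; rw [hcard]; exact h5
  rw [Set.ssubset_def] at hss
  obtain ⟨hsub, hnsub⟩ := hss
  by_cases hprop : ∃ c : F, ∀ k, b' k = c * b k
  · obtain ⟨c, hc⟩ := hprop
    obtain ⟨k1, hk1⟩ := Function.ne_iff.mp hb'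
    have hk1' : b' k1 ≠ 0 := by simpa using hk1
    have hc0 : c ≠ 0 := by
      intro h
      exact hk1' (by rw [hc k1, h, zero_mul])
    apply hnsub
    intro x hx
    obtain ⟨hQ, hLb⟩ := hx
    refine ⟨hQ, ?_⟩
    have hLL : Lfun b' x = c * Lfun b x := by
      unfold Lfun
      rw [Finset.mul_sum]
      apply Finset.sum_congr rfl
      intro k _
      rw [hc k]
      ring
    rw [hLL]
    exact mul_ne_zero hc0 hLb
  · push_neg at hprop
    obtain ⟨x, hQ, hL0, hL'⟩ := mainLem hn hn2 hq' a ha b b' hb hprop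
    exact (hsub ⟨hQ, hL'⟩).2 hL0
end

section
/- Let r be an even integer with 4 ≤ r ≤ m, let γ be a fixed nonsquare in F_q, let Q : F_q^m → F_q be the Type III quadratic form Q(x) = B_{r-2}(x) + x_{r-1}² − γ·x_r², and let a ∈ F_q be nonzero. Then all nonzero codewords of the code C are minimal: for any nonzero b, b' ∈ F_q^m, the set {x ∈ F_q^m : Q(x) = a and L_{b'}(x) ≠ 0} is not a proper subset of the set {x ∈ F_q^m : Q(x) = a and L_b(x) ≠ 0}. -/
open Finset

section LfunLemmas

variable {F : Type*} [Field F] {m : ℕ}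

lemma lfun_add_right (b x y : Fin m → F) : Lfun b (x + y) = Lfun b x + Lfun b y := by
  simp [Lfun, Pi.add_apply, mul_add, Finset.sum_add_distrib]

lemma lfun_single (b : Fin m → F) (i : Fin m) (c : F) :
    Lfun b (Pi.single i c) = b i * c := by
  classical
  unfold Lfun
  rw [Finset.sum_eq_single i]
  · rw [Pi.single_eq_same]
  · intro j _ hj
    rw [Pi.single_eq_of_ne hj, mul_zero]
  · intro h
    exact absurd (Finset.mem_univ i) h

lemma lfun_left_sub_smul (b b' x : Fin m → F) (μ : F) :
    Lfun (b' - μ • b) x = Lfun b' x - μ * Lfun b x := by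
  simp [Lfun, sub_mul, mul_assoc, Finset.sum_sub_distrib, Finset.mul_sum]

lemma lfun_smul_left (μ : F) (b x : Fin m → F) : Lfun (μ • b) x = μ * Lfun b x := by
  simp [Lfun, mul_assoc, Finset.mul_sum]

lemma lfun_comp_equiv (σ : Equiv.Perm (Fin m)) (b x : Fin m → F) :
    Lfun b (fun i => x (σ i)) = Lfun (fun j => b (σ.symm j)) x := by
  unfold Lfun
  rw [← Equiv.sum_comp σ (fun j => b (σ.symm j) * x j)]
  simp

end LfunLemmas

section NormLemmas

variable {F : Type*} [Field F] [Fintype F]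

lemma exists_sol (hodd : Fintype.card F % 2 = 1) (α β c : F) (hα : α ≠ 0) (hβ : β ≠ 0) :
    ∃ u v : F, α * u ^ 2 + β * v ^ 2 = c := by
  classical
  have hf2 : (Polynomial.C α * Polynomial.X ^ 2 : Polynomial F).degree = 2 := by
    simpa using Polynomial.degree_C_mul_X_pow 2 hα
  have hg2' : (Polynomial.C β * Polynomial.X ^ 2 : Polynomial F).degree = 2 := by
    simpa using Polynomial.degree_C_mul_X_pow 2 hβ
  have hg2 : (Polynomial.C β * Polynomial.X ^ 2 - Polynomial.C c : Polynomial F).degree = 2 := by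
    rw [Polynomial.degree_sub_eq_left_of_degree_lt, hg2']
    rw [hg2']
    exact lt_of_le_of_lt (Polynomial.degree_C_le) (by norm_num)
  obtain ⟨u, v, huv⟩ := FiniteField.exists_root_sum_quadratic hf2 hg2 hodd
  refine ⟨u, v, ?_⟩
  simp only [Polynomial.eval_mul, Polynomial.eval_pow, Polynomial.eval_C, Polynomial.eval_X,
    Polynomial.eval_sub, Polynomial.eval_add] at huv
  linear_combination huv

lemma norm_avoid (hodd : Fintype.card F % 2 = 1) (h2 : (2 : F) ≠ 0)
    (γ : F) (hγ : ¬ IsSquare γ) (a : F) (ha : a ≠ 0) (lU lV : F)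
    (hl : ¬ (lU = 0 ∧ lV = 0)) :
    ∃ U V : F, U ^ 2 - γ * V ^ 2 = a ∧ lU * U + lV * V ≠ 0 := by
  have hγ0 : γ ≠ 0 := fun h => hγ ⟨0, by simp [h]⟩
  have hγ1 : (1 : F) - γ ≠ 0 := by
    intro h
    exact hγ ⟨1, by linear_combination -h⟩
  obtain ⟨U₀, V₀, h₀⟩ := exists_sol hodd 1 (-γ) a one_ne_zero (neg_ne_zero.mpr hγ0)
  set xP : F := (1 + γ) / (1 - γ) with hxP
  set yP : F := 2 / (1 - γ) with hyPdef
  have hyP : yP ≠ 0 := div_ne_zero h2 hγ1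
  have hP : xP ^ 2 - γ * yP ^ 2 = 1 := by
    rw [hxP, hyPdef]
    field_simp
    ring
  by_cases h1 : lU * U₀ + lV * V₀ ≠ 0
  · exact ⟨U₀, V₀, by linear_combination h₀, h1⟩
  push_neg at h1
  by_cases h1' : lU * U₀ + lV * (-V₀) ≠ 0
  · exact ⟨U₀, -V₀, by linear_combination h₀, h1'⟩
  push_neg at h1'
  have hU : lU * U₀ = 0 := by
    have h2' : 2 * (lU * U₀) = 0 := by linear_combination h1 + h1'
    rcases mul_eq_zero.mp h2' with h | h
    · exact absurd h h2
    · exact h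
  have hV : lV * V₀ = 0 := by
    have h2' : 2 * (lV * V₀) = 0 := by linear_combination h1 - h1'
    rcases mul_eq_zero.mp h2' with h | h
    · exact absurd h h2
    · exact h
  by_cases h3 : lU * (U₀ * xP + γ * V₀ * yP) + lV * (U₀ * yP + V₀ * xP) ≠ 0
  · refine ⟨U₀ * xP + γ * V₀ * yP, U₀ * yP + V₀ * xP, ?_, h3⟩
    linear_combination (xP ^ 2 - γ * yP ^ 2) * h₀ + a * hP
  push_neg at h3
  by_cases h4 : lU * (U₀ * xP - γ * V₀ * yP) + lV * (U₀ * yP - V₀ * xP) ≠ 0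
  · refine ⟨U₀ * xP - γ * V₀ * yP, U₀ * yP - V₀ * xP, ?_, h4⟩
    linear_combination (xP ^ 2 - γ * yP ^ 2) * h₀ + a * hP
  push_neg at h4
  exfalso
  have hA : U₀ * (lU * xP + lV * yP) = 0 := by
    have h5 : 2 * (U₀ * (lU * xP + lV * yP)) = 0 := by linear_combination h3 + h4
    rcases mul_eq_zero.mp h5 with h | h
    · exact absurd h h2
    · exact h
  have hB : V₀ * (lU * γ * yP + lV * xP) = 0 := by
    have h5 : 2 * (V₀ * (lU * γ * yP + lV * xP)) = 0 := by linear_combination h3 - h4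
    rcases mul_eq_zero.mp h5 with h | h
    · exact absurd h h2
    · exact h
  by_cases hU₀ : U₀ = 0
  · have hV₀ : V₀ ≠ 0 := by
      intro h
      apply ha
      rw [← h₀, hU₀, h]
      ring
    have hlV : lV = 0 := by
      rcases mul_eq_zero.mp hV with h | h
      · exact h
      · exact absurd h hV₀
    have hlU : lU ≠ 0 := fun h => hl ⟨h, hlV⟩
    rcases mul_eq_zero.mp hB with h | h
    · exact hV₀ h
    · rw [hlV] at h
      have : lU * γ * yP = 0 := by linear_combination h
      rcases mul_eq_zero.mp this with h' | h'
      · rcases mul_eq_zero.mp h' with h'' | h''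
        · exact hlU h''
        · exact hγ0 h''
      · exact hyP h'
  · have hlU : lU = 0 := by
      rcases mul_eq_zero.mp hU with h | h
      · exact h
      · exact absurd h hU₀
    have hlV : lV ≠ 0 := fun h => hl ⟨hlU, h⟩
    rcases mul_eq_zero.mp hA with h | h
    · exact hU₀ h
    · rw [hlU] at h
      have : lV * yP = 0 := by linear_combination h
      rcases mul_eq_zero.mp this with h' | h'
      · exact hlV h'
      · exact hyP h'

lemma ct_lemma (hodd : Fintype.card F % 2 = 1) (h2 : (2 : F) ≠ 0)
    (γ : F) (hγ : ¬ IsSquare γ) (κ a l0 lU lV : F) (ha : a ≠ 0)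
    (hl : ¬ (l0 = 0 ∧ lU = 0 ∧ lV = 0)) :
    ∃ s U V : F, κ * s ^ 2 + U ^ 2 - γ * V ^ 2 = a ∧ l0 * s + lU * U + lV * V ≠ 0 := by
  have hγ0 : γ ≠ 0 := fun h => hγ ⟨0, by simp [h]⟩
  by_cases hUV : lU = 0 ∧ lV = 0
  · have hl0 : l0 ≠ 0 := fun h => hl ⟨h, hUV⟩
    obtain ⟨U, V, h⟩ := exists_sol hodd 1 (-γ) (a - κ) one_ne_zero (neg_ne_zero.mpr hγ0)
    refine ⟨1, U, V, by linear_combination h, ?_⟩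
    rw [hUV.1, hUV.2]
    simpa using hl0
  · obtain ⟨U, V, h, hne⟩ := norm_avoid hodd h2 γ hγ a ha lU lV hUV
    refine ⟨0, U, V, by linear_combination h, by simpa using hne⟩

end NormLemmas
section BformLemmas

variable {F : Type*} [Field F] {m r : ℕ}

lemma bform_decomp (hr4 : 4 ≤ r) (hrm : r ≤ m) (hre : r % 2 = 0)
    (x : Fin m → F) (i0 i1 : Fin m) (h0 : i0.val = 0) (h1 : i1.val = 1) :
    Bform ((r - 2) / 2) x = x i0 * x i1 +
      ∑ i ∈ Finset.range ((r - 2) / 2 - 1),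
        (if h : 2 * (i + 1) + 1 < m then x ⟨2 * (i + 1), by omega⟩ * x ⟨2 * (i + 1) + 1, h⟩
         else 0) := by
  unfold Bform
  rw [show (r - 2) / 2 = ((r - 2) / 2 - 1) + 1 by omega, Finset.sum_range_succ']
  rw [add_comm]
  congr 1
  rw [dif_pos (show 2 * 0 + 1 < m by omega)]
  congr 1
  · congr 1
    exact Fin.ext (by simpa using h0.symm)
  · congr 1
    exact Fin.ext (by simpa using h1.symm)

lemma middle_sum_zero (hr4 : 4 ≤ r) (hrm : r ≤ m) (hre : r % 2 = 0)
    (x : Fin m → F)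
    (hx : ∀ p q : Fin m, p.val + 1 = q.val → 2 ≤ p.val → q.val ≤ r - 3 → x p * x q = 0) :
    ∑ i ∈ Finset.range ((r - 2) / 2 - 1),
        (if h : 2 * (i + 1) + 1 < m then x ⟨2 * (i + 1), by omega⟩ * x ⟨2 * (i + 1) + 1, h⟩
         else 0) = 0 := by
  apply Finset.sum_eq_zero
  intro i hi
  rw [Finset.mem_range] at hi
  rw [dif_pos (show 2 * (i + 1) + 1 < m by omega)]
  exact hx _ _ rfl (by simp only [Fin.val_mk]; omega) (by simp only [Fin.val_mk]; omega)

lemma middle_sum_congr (hr4 : 4 ≤ r) (hrm : r ≤ m) (hre : r % 2 = 0)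
    (x z : Fin m → F)
    (hxz : ∀ p : Fin m, 2 ≤ p.val → p.val ≤ r - 3 → x p = z p) :
    ∑ i ∈ Finset.range ((r - 2) / 2 - 1),
        (if h : 2 * (i + 1) + 1 < m then x ⟨2 * (i + 1), by omega⟩ * x ⟨2 * (i + 1) + 1, h⟩
         else 0) =
    ∑ i ∈ Finset.range ((r - 2) / 2 - 1),
        (if h : 2 * (i + 1) + 1 < m then z ⟨2 * (i + 1), by omega⟩ * z ⟨2 * (i + 1) + 1, h⟩
         else 0) := by
  apply Finset.sum_congr rfl
  intro i hi
  rw [Finset.mem_range] at hi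
  rw [dif_pos (show 2 * (i + 1) + 1 < m by omega), dif_pos (show 2 * (i + 1) + 1 < m by omega)]
  rw [hxz _ (by simp only [Fin.val_mk]; omega) (by simp only [Fin.val_mk]; omega), hxz _ (by simp only [Fin.val_mk]; omega) (by simp only [Fin.val_mk]; omega)]

end BformLemmas
section Case1

variable {F : Type*} [Field F] [Fintype F] {m r : ℕ}

lemma case1 (hr4 : 4 ≤ r) (hrm : r ≤ m) (hre : r % 2 = 0)
    (hodd : Fintype.card F % 2 = 1) (h2 : (2 : F) ≠ 0)
    (γ : F) (hγ : ¬ IsSquare γ) (a : F) (ha : a ≠ 0)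
    (i0 i1 ef ff : Fin m) (h0 : i0.val = 0) (h1 : i1.val = 1)
    (hef : ef.val = r - 2) (hff : ff.val = r - 1)
    (b b' : Fin m → F) (hb1 : b i1 ≠ 0) (hind : ∀ μ : F, b' ≠ μ • b) :
    ∃ x : Fin m → F,
      Bform ((r - 2) / 2) x + x ef ^ 2 - γ * x ff ^ 2 = a ∧
      Lfun b x = 0 ∧ Lfun b' x ≠ 0 := by
  classical
  have hγ0 : γ ≠ 0 := fun h => hγ ⟨0, by simp [h]⟩
  have hef0 : ef ≠ i0 := Fin.ne_of_val_ne (by omega)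
  have hef1 : ef ≠ i1 := Fin.ne_of_val_ne (by omega)
  have hff0 : ff ≠ i0 := Fin.ne_of_val_ne (by omega)
  have hff1 : ff ≠ i1 := Fin.ne_of_val_ne (by omega)
  have heff : ef ≠ ff := Fin.ne_of_val_ne (by omega)
  have h01 : i0 ≠ i1 := Fin.ne_of_val_ne (by omega)
  set μ := b' i1 * (b i1)⁻¹ with hμdef
  set c : Fin m → F := b' - μ • b with hcdef
  have hc1 : c i1 = 0 := by
    rw [hcdef]
    simp only [Pi.sub_apply, Pi.smul_apply, smul_eq_mul]
    rw [hμdef]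
    field_simp
    ring
  have hcne : c ≠ 0 := by
    intro h
    rw [hcdef] at h
    exact hind μ (sub_eq_zero.mp h)
  have hbp : ∀ x : Fin m → F, Lfun b' x = Lfun c x + μ * Lfun b x := by
    intro x
    rw [hcdef, lfun_left_sub_smul]
    ring
  by_cases hsupp : c i0 = 0 ∧ c ef = 0 ∧ c ff = 0
  · -- case 1b : c supported away from i0, i1, ef, ff
    obtain ⟨k, hk⟩ := Function.ne_iff.mp hcne
    simp only [Pi.zero_apply] at hk
    have hk0 : k ≠ i0 := fun h => hk (h ▸ hsupp.1)
    have hk1 : k ≠ i1 := fun h => hk (h ▸ hc1)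
    have hke : k ≠ ef := fun h => hk (h ▸ hsupp.2.1)
    have hkf : k ≠ ff := fun h => hk (h ▸ hsupp.2.2)
    obtain ⟨u, v, huv⟩ := exists_sol hodd 1 (-γ) a one_ne_zero (neg_ne_zero.mpr hγ0)
    set x1 : F := -(b ef * u + b ff * v + b k) * (b i1)⁻¹ with hx1def
    set x : Fin m → F :=
      Pi.single i1 x1 + Pi.single ef u + Pi.single ff v + Pi.single k 1 with hxdef
    have hxi0 : x i0 = 0 := by
      rw [hxdef]
      simp only [Pi.add_apply]
      rw [Pi.single_eq_of_ne h01, Pi.single_eq_of_ne (Ne.symm hef0),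
        Pi.single_eq_of_ne (Ne.symm hff0), Pi.single_eq_of_ne (Ne.symm hk0)]
      ring
    have hxi1 : x i1 = x1 := by
      rw [hxdef]
      simp only [Pi.add_apply]
      rw [Pi.single_eq_same, Pi.single_eq_of_ne (Ne.symm hef1),
        Pi.single_eq_of_ne (Ne.symm hff1), Pi.single_eq_of_ne (Ne.symm hk1)]
      ring
    have hxef : x ef = u := by
      rw [hxdef]
      simp only [Pi.add_apply]
      rw [Pi.single_eq_of_ne hef1, Pi.single_eq_same,
        Pi.single_eq_of_ne heff, Pi.single_eq_of_ne (Ne.symm hke)]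
      ring
    have hxff : x ff = v := by
      rw [hxdef]
      simp only [Pi.add_apply]
      rw [Pi.single_eq_of_ne hff1, Pi.single_eq_of_ne (Ne.symm heff),
        Pi.single_eq_same, Pi.single_eq_of_ne (Ne.symm hkf)]
      ring
    have hLb : Lfun b x = 0 := by
      rw [hxdef, lfun_add_right, lfun_add_right, lfun_add_right,
        lfun_single, lfun_single, lfun_single, lfun_single, hx1def]
      field_simp
      ring
    have hLc : Lfun c x = c k := by
      rw [hxdef, lfun_add_right, lfun_add_right, lfun_add_right,
        lfun_single, lfun_single, lfun_single, lfun_single, hc1, hsupp.2.1, hsupp.2.2]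
      ring
    refine ⟨x, ?_, hLb, ?_⟩
    · rw [bform_decomp hr4 hrm hre x i0 i1 h0 h1]
      rw [middle_sum_zero hr4 hrm hre x ?hx]
      case hx =>
        intro p q hpq h2p hq3
        rcases eq_or_ne p k with hpk | hpk
        · apply mul_eq_zero_of_right
          rw [hxdef]
          simp only [Pi.add_apply]
          rw [Pi.single_eq_of_ne (Fin.ne_of_val_ne (by omega)),
            Pi.single_eq_of_ne (Fin.ne_of_val_ne (by omega)),
            Pi.single_eq_of_ne (Fin.ne_of_val_ne (by omega)),
            Pi.single_eq_of_ne (Fin.ne_of_val_ne (by rw [← hpk]; omega))]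
          ring
        · apply mul_eq_zero_of_left
          rw [hxdef]
          simp only [Pi.add_apply]
          rw [Pi.single_eq_of_ne (Fin.ne_of_val_ne (by omega)),
            Pi.single_eq_of_ne (Fin.ne_of_val_ne (by omega)),
            Pi.single_eq_of_ne (Fin.ne_of_val_ne (by omega)),
            Pi.single_eq_of_ne hpk]
          ring
      rw [hxi0, hxi1, hxef, hxff]
      linear_combination huv
    · rw [hbp x, hLb, hLc]
      simpa using hk
  · -- case 1a : c has support in {i0, ef, ff}
    have h4 : (4 : F) ≠ 0 := by
      intro h
      apply h2
      have h4' : (2 : F) * 2 = 0 := by linear_combination h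
      rcases mul_eq_zero.mp h4' with h'' | h'' <;> exact h''
    have h2b : (2 : F) * b i1 ≠ 0 := mul_ne_zero h2 hb1
    have h2γb : (2 : F) * γ * b i1 ≠ 0 := mul_ne_zero (mul_ne_zero h2 hγ0) hb1
    set pu : F := b ef / (2 * b i1) with hpudef
    set pv : F := -(b ff) / (2 * γ * b i1) with hpvdef
    set κ : F := (b ff ^ 2 - γ * b ef ^ 2 - 4 * γ * b i1 * b i0) / (4 * γ * b i1 ^ 2) with hκdef
    set l0 : F := c i0 + c ef * pu + c ff * pv with hl0def
    have hl : ¬ (l0 = 0 ∧ c ef = 0 ∧ c ff = 0) := by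
      rintro ⟨hA, hB, hC⟩
      apply hsupp
      refine ⟨?_, hB, hC⟩
      rw [hl0def, hB, hC] at hA
      simpa using hA
    obtain ⟨s, U, V, hsol, hne⟩ := ct_lemma hodd h2 γ hγ κ a l0 (c ef) (c ff) ha hl
    set u : F := U + pu * s with hudef
    set v : F := V + pv * s with hvdef
    set x1 : F := -(b i0 * s + b ef * u + b ff * v) * (b i1)⁻¹ with hx1def
    set x : Fin m → F :=
      Pi.single i0 s + Pi.single i1 x1 + Pi.single ef u + Pi.single ff v with hxdef
    have hxi0 : x i0 = s := by
      rw [hxdef]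
      simp only [Pi.add_apply]
      rw [Pi.single_eq_same, Pi.single_eq_of_ne h01, Pi.single_eq_of_ne (Ne.symm hef0),
        Pi.single_eq_of_ne (Ne.symm hff0)]
      ring
    have hxi1 : x i1 = x1 := by
      rw [hxdef]
      simp only [Pi.add_apply]
      rw [Pi.single_eq_of_ne (Ne.symm h01), Pi.single_eq_same,
        Pi.single_eq_of_ne (Ne.symm hef1), Pi.single_eq_of_ne (Ne.symm hff1)]
      ring
    have hxef : x ef = u := by
      rw [hxdef]
      simp only [Pi.add_apply]
      rw [Pi.single_eq_of_ne hef0, Pi.single_eq_of_ne hef1, Pi.single_eq_same,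
        Pi.single_eq_of_ne heff]
      ring
    have hxff : x ff = v := by
      rw [hxdef]
      simp only [Pi.add_apply]
      rw [Pi.single_eq_of_ne hff0, Pi.single_eq_of_ne hff1,
        Pi.single_eq_of_ne (Ne.symm heff), Pi.single_eq_same]
      ring
    have hLb : Lfun b x = 0 := by
      rw [hxdef, lfun_add_right, lfun_add_right, lfun_add_right,
        lfun_single, lfun_single, lfun_single, lfun_single, hx1def]
      field_simp
      ring
    have hLc : Lfun c x = l0 * s + c ef * U + c ff * V := by
      rw [hxdef, lfun_add_right, lfun_add_right, lfun_add_right,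
        lfun_single, lfun_single, lfun_single, lfun_single, hc1, hudef, hvdef, hl0def]
      ring
    refine ⟨x, ?_, hLb, ?_⟩
    · rw [bform_decomp hr4 hrm hre x i0 i1 h0 h1]
      rw [middle_sum_zero hr4 hrm hre x ?hx]
      case hx =>
        intro p q hpq h2p hq3
        apply mul_eq_zero_of_left
        rw [hxdef]
        simp only [Pi.add_apply]
        rw [Pi.single_eq_of_ne (Fin.ne_of_val_ne (by omega)),
          Pi.single_eq_of_ne (Fin.ne_of_val_ne (by omega)),
          Pi.single_eq_of_ne (Fin.ne_of_val_ne (by omega)),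
          Pi.single_eq_of_ne (Fin.ne_of_val_ne (by omega))]
        ring
      rw [hxi0, hxi1, hxef, hxff]
      have h4γb : (4 : F) * γ * b i1 ^ 2 ≠ 0 :=
        mul_ne_zero (mul_ne_zero h4 hγ0) (pow_ne_zero 2 hb1)
      have E1 : b i1 * x1 = -(b i0 * s + b ef * u + b ff * v) := by
        rw [hx1def]
        field_simp
      have E2 : 2 * b i1 * u = 2 * b i1 * U + b ef * s := by
        rw [hudef, hpudef]
        field_simp
      have E3 : 2 * γ * b i1 * v = 2 * γ * b i1 * V - b ff * s := by
        rw [hvdef, hpvdef]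
        field_simp
        ring
      have E4 : 4 * γ * b i1 ^ 2 * κ = -(4 * γ * b i1 * b i0) - γ * b ef ^ 2 + b ff ^ 2 := by
        rw [hκdef]
        rw [mul_div_assoc', mul_comm, mul_div_assoc]
        rw [div_self h4γb]
        ring
      have keyS : 4 * γ * b i1 ^ 2 * (s * x1 + 0 + u ^ 2 - γ * v ^ 2) = 4 * γ * b i1 ^ 2 * a := by
        linear_combination (4 * γ * b i1 ^ 2) * hsol + (4 * γ * b i1 * s) * E1 +
          (γ * (2 * b i1 * u + 2 * b i1 * U - b ef * s)) * E2 +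
          (-(2 * γ * b i1 * v + 2 * γ * b i1 * V + b ff * s)) * E3 + (-(s ^ 2)) * E4
      exact mul_left_cancel₀ h4γb keyS
    · rw [hbp x, hLb, hLc]
      simpa using hne

end Case1
section Case2

variable {F : Type*} [Field F] [Fintype F] {m r : ℕ}

lemma case2 (hr4 : 4 ≤ r) (hrm : r ≤ m) (hre : r % 2 = 0)
    (h2 : (2 : F) ≠ 0)
    (γ : F) (hγ : ¬ IsSquare γ) (a : F) (ha : a ≠ 0)
    (i0 i1 ef ff : Fin m) (h0 : i0.val = 0) (h1 : i1.val = 1)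
    (hef : ef.val = r - 2) (hff : ff.val = r - 1)
    (b b' : Fin m → F) (hb0 : b i0 = 0) (hb1 : b i1 = 0) (hbne : b ≠ 0)
    (hind : ∀ μ : F, b' ≠ μ • b) :
    ∃ x : Fin m → F,
      Bform ((r - 2) / 2) x + x ef ^ 2 - γ * x ff ^ 2 = a ∧
      Lfun b x = 0 ∧ Lfun b' x ≠ 0 := by
  classical
  have hγ0 : γ ≠ 0 := fun h => hγ ⟨0, by simp [h]⟩
  have hef0 : ef ≠ i0 := Fin.ne_of_val_ne (by omega)
  have hef1 : ef ≠ i1 := Fin.ne_of_val_ne (by omega)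
  have hff0 : ff ≠ i0 := Fin.ne_of_val_ne (by omega)
  have hff1 : ff ≠ i1 := Fin.ne_of_val_ne (by omega)
  have heff : ef ≠ ff := Fin.ne_of_val_ne (by omega)
  have h01 : i0 ≠ i1 := Fin.ne_of_val_ne (by omega)
  obtain ⟨ge, gf, hker, hn⟩ :
      ∃ ge gf : F, b ef * ge + b ff * gf = 0 ∧ ge ^ 2 - γ * gf ^ 2 ≠ 0 := by
    by_cases hbef : b ef = 0 ∧ b ff = 0
    · refine ⟨1, 0, by rw [hbef.1, hbef.2]; ring, by norm_num⟩
    · refine ⟨b ff, -(b ef), by ring, ?_⟩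
      intro hcontra
      rcases eq_or_ne (b ef) 0 with he0 | he0
      · rw [he0] at hcontra
        have hf0 : b ff = 0 := by
          have h' : b ff ^ 2 = 0 := by linear_combination hcontra
          exact pow_eq_zero_iff (by norm_num) |>.mp h'
        exact hbef ⟨he0, hf0⟩
      · apply hγ
        refine ⟨b ff / b ef, ?_⟩
        rw [div_mul_div_comm, eq_div_iff (mul_ne_zero he0 he0)]
        linear_combination -hcontra
  by_cases hb01' : b' i0 = 0 ∧ b' i1 = 0
  · -- linear algebra case
    obtain ⟨ii, hii⟩ := Function.ne_iff.mp hbne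
    simp only [Pi.zero_apply] at hii
    have hii0 : ii ≠ i0 := fun h => hii (h ▸ hb0)
    have hii1 : ii ≠ i1 := fun h => hii (h ▸ hb1)
    set lam : F := b' ii * (b ii)⁻¹ with hlamdef
    obtain ⟨jj, hjj⟩ : ∃ j, b' j ≠ lam * b j := by
      by_contra hall
      push_neg at hall
      exact hind lam (funext fun j => hall j)
    have hjj0 : jj ≠ i0 := fun h => hjj (by rw [h, hb0, hb01'.1]; ring)
    have hjj1 : jj ≠ i1 := fun h => hjj (by rw [h, hb1, hb01'.2]; ring)
    have hjjii : jj ≠ ii := fun h => hjj (by rw [h, hlamdef]; field_simp)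
    set ci : F := -(b jj) * (b ii)⁻¹ with hcidef
    set z : Fin m → F := Pi.single jj 1 + Pi.single ii ci with hzdef
    have hz0 : z i0 = 0 := by
      rw [hzdef]
      simp only [Pi.add_apply]
      rw [Pi.single_eq_of_ne (Ne.symm hjj0), Pi.single_eq_of_ne (Ne.symm hii0)]
      ring
    have hz1 : z i1 = 0 := by
      rw [hzdef]
      simp only [Pi.add_apply]
      rw [Pi.single_eq_of_ne (Ne.symm hjj1), Pi.single_eq_of_ne (Ne.symm hii1)]
      ring
    set Qz : F := Bform ((r - 2) / 2) z + z ef ^ 2 - γ * z ff ^ 2 with hQzdef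
    set t : F := a - Qz with htdef
    set x : Fin m → F := Pi.single i0 1 + Pi.single i1 t + z with hxdef
    have hxi0 : x i0 = 1 := by
      rw [hxdef]
      simp only [Pi.add_apply]
      rw [Pi.single_eq_same, Pi.single_eq_of_ne h01, hz0]
      ring
    have hxi1 : x i1 = t := by
      rw [hxdef]
      simp only [Pi.add_apply]
      rw [Pi.single_eq_of_ne (Ne.symm h01), Pi.single_eq_same, hz1]
      ring
    have hxef : x ef = z ef := by
      rw [hxdef]
      simp only [Pi.add_apply]
      rw [Pi.single_eq_of_ne hef0, Pi.single_eq_of_ne hef1]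
      ring
    have hxff : x ff = z ff := by
      rw [hxdef]
      simp only [Pi.add_apply]
      rw [Pi.single_eq_of_ne hff0, Pi.single_eq_of_ne hff1]
      ring
    have hagree : ∀ p : Fin m, 2 ≤ p.val → p.val ≤ r - 3 → x p = z p := by
      intro p h2p h3p
      rw [hxdef]
      simp only [Pi.add_apply]
      rw [Pi.single_eq_of_ne (Fin.ne_of_val_ne (by omega)),
        Pi.single_eq_of_ne (Fin.ne_of_val_ne (by omega))]
      ring
    refine ⟨x, ?_, ?_, ?_⟩
    · rw [bform_decomp hr4 hrm hre x i0 i1 h0 h1,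
        middle_sum_congr hr4 hrm hre x z hagree, hxi0, hxi1, hxef, hxff]
      have hSig : (∑ i ∈ Finset.range ((r - 2) / 2 - 1),
          (if h : 2 * (i + 1) + 1 < m then z ⟨2 * (i + 1), by omega⟩ * z ⟨2 * (i + 1) + 1, h⟩
           else 0)) = Bform ((r - 2) / 2) z := by
        rw [bform_decomp hr4 hrm hre z i0 i1 h0 h1, hz0]
        ring
      rw [hSig, htdef, hQzdef]
      ring
    · rw [hxdef, lfun_add_right, lfun_add_right, lfun_single, lfun_single,
        hzdef, lfun_add_right, lfun_single, lfun_single, hb0, hb1, hcidef]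
      field_simp
      ring
    · have hLb' : Lfun b' x = b' jj - lam * b jj := by
        rw [hxdef, lfun_add_right, lfun_add_right, lfun_single, lfun_single,
          hzdef, lfun_add_right, lfun_single, lfun_single, hb01'.1, hb01'.2,
          hcidef, hlamdef]
        ring
      rw [hLb']
      exact sub_ne_zero.mpr hjj
  · -- quadratic in μ case
    set A : F := b' i0 + a * b' i1 with hAdef
    set B : F := b' ef * ge + b' ff * gf with hBdef
    have main : ∀ μ : F, ∃ x : Fin m → F,
        (Bform ((r - 2) / 2) x + x ef ^ 2 - γ * x ff ^ 2 = a ∧ Lfun b x = 0) ∧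
        Lfun b' x = A + B * μ - b' i1 * (ge ^ 2 - γ * gf ^ 2) * μ ^ 2 := by
      intro μ
      set t : F := a - μ ^ 2 * (ge ^ 2 - γ * gf ^ 2) with htdef
      set x : Fin m → F :=
        Pi.single i0 1 + Pi.single i1 t + Pi.single ef (μ * ge) + Pi.single ff (μ * gf)
        with hxdef
      have hxi0 : x i0 = 1 := by
        rw [hxdef]
        simp only [Pi.add_apply]
        rw [Pi.single_eq_same, Pi.single_eq_of_ne h01, Pi.single_eq_of_ne (Ne.symm hef0),
          Pi.single_eq_of_ne (Ne.symm hff0)]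
        ring
      have hxi1 : x i1 = t := by
        rw [hxdef]
        simp only [Pi.add_apply]
        rw [Pi.single_eq_of_ne (Ne.symm h01), Pi.single_eq_same,
          Pi.single_eq_of_ne (Ne.symm hef1), Pi.single_eq_of_ne (Ne.symm hff1)]
        ring
      have hxef : x ef = μ * ge := by
        rw [hxdef]
        simp only [Pi.add_apply]
        rw [Pi.single_eq_of_ne hef0, Pi.single_eq_of_ne hef1, Pi.single_eq_same,
          Pi.single_eq_of_ne heff]
        ring
      have hxff : x ff = μ * gf := by
        rw [hxdef]
        simp only [Pi.add_apply]
        rw [Pi.single_eq_of_ne hff0, Pi.single_eq_of_ne hff1,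
          Pi.single_eq_of_ne (Ne.symm heff), Pi.single_eq_same]
        ring
      refine ⟨x, ⟨?_, ?_⟩, ?_⟩
      · rw [bform_decomp hr4 hrm hre x i0 i1 h0 h1]
        rw [middle_sum_zero hr4 hrm hre x ?hx]
        case hx =>
          intro p q hpq h2p hq3
          apply mul_eq_zero_of_left
          rw [hxdef]
          simp only [Pi.add_apply]
          rw [Pi.single_eq_of_ne (Fin.ne_of_val_ne (by omega)),
            Pi.single_eq_of_ne (Fin.ne_of_val_ne (by omega)),
            Pi.single_eq_of_ne (Fin.ne_of_val_ne (by omega)),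
            Pi.single_eq_of_ne (Fin.ne_of_val_ne (by omega))]
          ring
        rw [hxi0, hxi1, hxef, hxff, htdef]
        ring
      · rw [hxdef, lfun_add_right, lfun_add_right, lfun_add_right,
          lfun_single, lfun_single, lfun_single, lfun_single, hb0, hb1]
        linear_combination μ * hker
      · rw [hxdef, lfun_add_right, lfun_add_right, lfun_add_right,
          lfun_single, lfun_single, lfun_single, lfun_single, htdef, hAdef, hBdef]
        ring
    obtain ⟨x1v, hx1p, hx1L⟩ := main 1
    by_cases hz1 : Lfun b' x1v = 0
    swap
    · exact ⟨x1v, hx1p.1, hx1p.2, hz1⟩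
    obtain ⟨x2v, hx2p, hx2L⟩ := main (-1)
    by_cases hz2 : Lfun b' x2v = 0
    swap
    · exact ⟨x2v, hx2p.1, hx2p.2, hz2⟩
    obtain ⟨x0v, hx0p, hx0L⟩ := main 0
    by_cases hz0 : Lfun b' x0v = 0
    swap
    · exact ⟨x0v, hx0p.1, hx0p.2, hz0⟩
    exfalso
    rw [hx1L] at hz1
    rw [hx2L] at hz2
    rw [hx0L] at hz0
    have h5 : b' i1 * ((ge ^ 2 - γ * gf ^ 2) * 2) = 0 := by
      linear_combination -hz1 - hz2 + 2 * hz0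
    have hb'i1 : b' i1 = 0 := by
      rcases mul_eq_zero.mp h5 with h | h
      · exact h
      · rcases mul_eq_zero.mp h with h' | h'
        · exact absurd h' hn
        · exact absurd h' h2
    exact hb01' ⟨by linear_combination hz0 - hAdef - a * hb'i1, hb'i1⟩

end Case2

section Swap

variable {F : Type*} [Field F] {m r : ℕ}

lemma qf_swap (hr4 : 4 ≤ r) (hrm : r ≤ m) (hre : r % 2 = 0)
    (γ : F) (x : Fin m → F)
    (i0 i1 ef ff : Fin m) (h0 : i0.val = 0) (h1 : i1.val = 1)
    (hef : ef.val = r - 2) (hff : ff.val = r - 1) :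
    Bform ((r - 2) / 2) (fun i => x (Equiv.swap i0 i1 i)) +
      (x (Equiv.swap i0 i1 ef)) ^ 2 - γ * (x (Equiv.swap i0 i1 ff)) ^ 2 =
    Bform ((r - 2) / 2) x + x ef ^ 2 - γ * x ff ^ 2 := by
  have hef0 : ef ≠ i0 := Fin.ne_of_val_ne (by omega)
  have hef1 : ef ≠ i1 := Fin.ne_of_val_ne (by omega)
  have hff0 : ff ≠ i0 := Fin.ne_of_val_ne (by omega)
  have hff1 : ff ≠ i1 := Fin.ne_of_val_ne (by omega)
  rw [Equiv.swap_apply_of_ne_of_ne hef0 hef1, Equiv.swap_apply_of_ne_of_ne hff0 hff1]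
  congr 2
  rw [bform_decomp hr4 hrm hre (fun i => x (Equiv.swap i0 i1 i)) i0 i1 h0 h1,
    bform_decomp hr4 hrm hre x i0 i1 h0 h1]
  have hmid : ∀ p : Fin m, 2 ≤ p.val → p.val ≤ r - 3 →
      (fun i => x (Equiv.swap i0 i1 i)) p = x p := by
    intro p h2p h3p
    simp only []
    rw [Equiv.swap_apply_of_ne_of_ne (Fin.ne_of_val_ne (by omega))
      (Fin.ne_of_val_ne (by omega))]
  rw [middle_sum_congr hr4 hrm hre (fun i => x (Equiv.swap i0 i1 i)) x hmid]
  simp only [Equiv.swap_apply_left, Equiv.swap_apply_right]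
  ring

end Swap
theorem statement17 (p e q m r : ℕ) (F : Type*) [Field F] [Fintype F] [DecidableEq F]
    (hp : p.Prime) (hpodd : Odd p) (he : 0 < e) (hq : q = p ^ e)
    (hcard : Fintype.card F = q)
    (hreven : Even r) (hr4 : 4 ≤ r) (hrm : r ≤ m)
    (γ : F) (hγ : ¬ IsSquare γ)
    (Q : (Fin m → F) → F)
    (hQ : ∀ x : Fin m → F,
      Q x = Bform ((r - 2) / 2) x + x ⟨r - 2, by omega⟩ ^ 2 - γ * x ⟨r - 1, by omega⟩ ^ 2)
    (a : F) (ha : a ≠ 0) :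
    ∀ b b' : Fin m → F, b ≠ 0 → b' ≠ 0 →
      ¬ ({x : Fin m → F | Q x = a ∧ Lfun b' x ≠ 0}
          ⊂ {x : Fin m → F | Q x = a ∧ Lfun b x ≠ 0}) := by
  intro b b' hb hb' hss
  have hre : r % 2 = 0 := Nat.even_iff.mp hreven
  have hodd : Fintype.card F % 2 = 1 := by
    rw [hcard, hq]
    exact Nat.odd_iff.mp (Odd.pow hpodd)
  have h2 : (2 : F) ≠ 0 := by
    intro h20
    have h20' : ((2 : ℕ) : F) = 0 := by exact_mod_cast h20
    have hdvd : ringChar F ∣ 2 := (CharP.cast_eq_zero_iff F (ringChar F) 2).mp h20'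
    rcases (Nat.prime_two.eq_one_or_self_of_dvd _ hdvd) with h1' | h2'
    · exact CharP.char_ne_one F (ringChar F) h1'
    · haveI : CharP F 2 := h2' ▸ ringChar.charP F
      obtain ⟨n, hnp, hcard2⟩ := FiniteField.card F 2
      have hodd' := hodd
      rw [hcard2] at hodd'
      have hdvd2 : 2 ∣ 2 ^ (n : ℕ) := dvd_pow_self 2 n.pos.ne'
      omega
  by_cases hdep : ∃ μ : F, b' = μ • b
  · obtain ⟨μ, hbeq⟩ := hdep
    have hμ : μ ≠ 0 := by
      rintro rfl
      apply hb'
      rw [hbeq, zero_smul]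
    obtain ⟨x₀, hx₀S, hx₀S'⟩ := Set.exists_of_ssubset hss
    obtain ⟨hQ0, hL0⟩ := hx₀S
    apply hx₀S'
    refine ⟨hQ0, ?_⟩
    rw [hbeq, lfun_smul_left]
    exact mul_ne_zero hμ hL0
  · push_neg at hdep
    have key : ∃ x : Fin m → F,
        (Bform ((r - 2) / 2) x + x (⟨r - 2, by omega⟩ : Fin m) ^ 2
          - γ * x (⟨r - 1, by omega⟩ : Fin m) ^ 2 = a) ∧
        Lfun b x = 0 ∧ Lfun b' x ≠ 0 := by
      by_cases hb1 : b ⟨1, by omega⟩ ≠ 0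
      · exact case1 hr4 hrm hre hodd h2 γ hγ a ha ⟨0, by omega⟩ ⟨1, by omega⟩
          ⟨r - 2, by omega⟩ ⟨r - 1, by omega⟩ rfl rfl rfl rfl b b' hb1 hdep
      · push_neg at hb1
        by_cases hb0 : b ⟨0, by omega⟩ ≠ 0
        · -- swap the roles of coordinates 0 and 1
          set σ := Equiv.swap (⟨0, by omega⟩ : Fin m) ⟨1, by omega⟩ with hσ
          have hB1 : (fun j => b (σ j)) ⟨1, by omega⟩ ≠ 0 := by
            simpa only [hσ, Equiv.swap_apply_right] using hb0
          have hindB : ∀ μ : F, (fun j => b' (σ j)) ≠ μ • (fun j => b (σ j)) := by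
            intro μ hcontra
            apply hdep μ
            funext i
            have hc := congrFun hcontra (σ.symm i)
            simp only [Pi.smul_apply, smul_eq_mul] at hc ⊢
            rwa [Equiv.apply_symm_apply] at hc
          obtain ⟨x, hx1, hx2, hx3⟩ := case1 hr4 hrm hre hodd h2 γ hγ a ha
            ⟨0, by omega⟩ ⟨1, by omega⟩ ⟨r - 2, by omega⟩ ⟨r - 1, by omega⟩
            rfl rfl rfl rfl (fun j => b (σ j)) (fun j => b' (σ j)) hB1 hindB
          refine ⟨fun i => x (σ i), ?_, ?_, ?_⟩
          · have hq := qf_swap hr4 hrm hre γ x ⟨0, by omega⟩ ⟨1, by omega⟩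
              ⟨r - 2, by omega⟩ ⟨r - 1, by omega⟩ rfl rfl rfl rfl
            rw [← hσ] at hq
            exact hq.trans hx1
          · have hl := lfun_comp_equiv σ b x
            rw [hl, show σ.symm = σ from hσ ▸ Equiv.symm_swap _ _]
            exact hx2
          · have hl := lfun_comp_equiv σ b' x
            rw [hl, show σ.symm = σ from hσ ▸ Equiv.symm_swap _ _]
            exact hx3
        · push_neg at hb0
          exact case2 hr4 hrm hre h2 γ hγ a ha ⟨0, by omega⟩ ⟨1, by omega⟩
            ⟨r - 2, by omega⟩ ⟨r - 1, by omega⟩ rfl rfl rfl rfl b b' hb0 hb1 hb hdep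
    obtain ⟨x, hxQ, hxb, hxb'⟩ := key
    have hmem' : x ∈ {x : Fin m → F | Q x = a ∧ Lfun b' x ≠ 0} :=
      ⟨by rw [hQ x]; exact hxQ, hxb'⟩
    have hmem := hss.subset hmem'
    exact hmem.2 hxb
end

section
/- Let r be an even integer with 2 ≤ r ≤ m such that r ≥ 4 or q ≥ 5, let Q : F_q^m → F_q be the Type I quadratic form Q(x) = B_r(x), and let a ∈ F_q be nonzero. Then the map sending b ∈ F_q^m to the codeword c_b = (L_b(x))_{x ∈ D} is injective; equivalently, for every nonzero b ∈ F_q^m there exists x ∈ F_q^m with Q(x) = a and L_b(x) ≠ 0. In particular the code C has exactly q^m codewords, i.e. dimension m over F_q. -/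
open Finset

lemma Lfun_support {F : Type*} [CommRing F] {m : ℕ} (b x : Fin m → F) (s : Finset (Fin m))
    (h : ∀ i ∉ s, x i = 0) : Lfun b x = ∑ i ∈ s, b i * x i := by
  rw [Lfun]
  exact (Finset.sum_subset s.subset_univ (fun i _ hi => by rw [h i hi, mul_zero])).symm

/-- Case 1: the nonzero coordinate of `b` lies outside the support of the form. -/
lemma aux_case1 {F : Type*} [Field F] {m r : ℕ}
    (hreven : Even r) (hr2 : 2 ≤ r) (hrm : r ≤ m)
    (a : F) (b : Fin m → F) (k : Fin m) (hk : b k ≠ 0)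
    (hkr : r ≤ (k : ℕ)) :
    ∃ x : Fin m → F, Bform (r / 2) x = a ∧ Lfun b x ≠ 0 := by
  have hj : 2 * (r / 2) = r := by obtain ⟨c, hc⟩ := hreven; omega
  set j := r / 2 with hjdef
  have hj1 : 1 ≤ j := by omega
  have h0m : 0 < m := by omega
  have h1m : 1 < m := by omega
  set i0 : Fin m := ⟨0, h0m⟩ with hi0
  set i1 : Fin m := ⟨1, h1m⟩ with hi1
  set t : F := (1 - b i0 - b i1 * a) * (b k)⁻¹ with htd
  set x : Fin m → F := fun i : Fin m =>
      if (i : ℕ) = 0 then 1 else if (i : ℕ) = 1 then a else if (i : ℕ) = (k : ℕ) then t else 0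
    with hxd
  have hxval : ∀ (n : ℕ) (hn : n < m), n ≠ 0 → n ≠ 1 → n ≠ (k : ℕ) → x ⟨n, hn⟩ = 0 := by
    intro n hn h1 h2 h3
    rw [hxd]
    simp only [Fin.val_mk]
    rw [if_neg h1, if_neg h2, if_neg h3]
  have hx0 : x i0 = 1 := by rw [hxd, hi0]; simp
  have hx1 : x i1 = a := by rw [hxd, hi1]; simp
  have hxk : x k = t := by
    rw [hxd]; simp only
    rw [if_neg (by omega), if_neg (by omega)]
    simp
  have hne01 : i0 ≠ i1 := by simp only [ne_eq, Fin.ext_iff, Fin.val_mk, hi0, hi1]; omega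
  have hne0k : i0 ≠ k := by simp only [ne_eq, Fin.ext_iff, Fin.val_mk, hi0]; omega
  have hne1k : i1 ≠ k := by simp only [ne_eq, Fin.ext_iff, Fin.val_mk, hi1]; omega
  have hmem0 : i0 ∉ ({i1, k} : Finset (Fin m)) := by
    simp only [Finset.mem_insert, Finset.mem_singleton, not_or]
    exact ⟨hne01, hne0k⟩
  have hmem1 : i1 ∉ ({k} : Finset (Fin m)) := by simpa using hne1k
  refine ⟨x, ?_, ?_⟩
  · rw [Bform]
    rw [Finset.sum_eq_single_of_mem 0 (Finset.mem_range.mpr hj1)]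
    · rw [dif_pos (by omega : 2 * 0 + 1 < m)]
      have e0 : x ⟨2 * 0, by omega⟩ = 1 := by rw [hxd]; simp
      have e1 : x ⟨2 * 0 + 1, by omega⟩ = a := by rw [hxd]; simp
      rw [e0, e1, one_mul]
    · intro i hi hne
      rw [Finset.mem_range] at hi
      rw [dif_pos (by omega : 2 * i + 1 < m)]
      rw [hxval (2 * i) (by omega) (by omega) (by omega) (by omega), zero_mul]
  · rw [Lfun_support b x {i0, i1, k}]
    · rw [Finset.sum_insert hmem0, Finset.sum_insert hmem1, Finset.sum_singleton]
      rw [hx0, hx1, hxk, htd]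
      have key : b i0 * 1 + (b i1 * a + b k * ((1 - b i0 - b i1 * a) * (b k)⁻¹)) = 1 := by
        field_simp
        ring
      rw [key]
      exact one_ne_zero
    · intro i hi
      simp only [Finset.mem_insert, Finset.mem_singleton, not_or] at hi
      obtain ⟨h1, h2, h3⟩ := hi
      have := hxval i.val i.isLt (fun h => h1 (Fin.ext h)) (fun h => h2 (Fin.ext h))
        (fun h => h3 (Fin.ext h))
      simpa using this

/-- Case 2: `r ≥ 4` and the nonzero coordinate of `b` lies inside the support of the form. -/
lemma aux_case2 {F : Type*} [Field F] {m r : ℕ}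
    (hreven : Even r) (hr4 : 4 ≤ r) (hrm : r ≤ m)
    (a : F) (b : Fin m → F) (k : Fin m) (hk : b k ≠ 0)
    (hkr : (k : ℕ) < r) :
    ∃ x : Fin m → F, Bform (r / 2) x = a ∧ Lfun b x ≠ 0 := by
  have hj : 2 * (r / 2) = r := by obtain ⟨c, hc⟩ := hreven; omega
  set j := r / 2 with hjdef
  have hj2 : 2 ≤ j := by omega
  obtain ⟨i', hi'lt, hi'ne⟩ : ∃ i', i' < j ∧ i' ≠ (k : ℕ) / 2 := by
    rcases eq_or_ne ((k : ℕ) / 2) 0 with h | h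
    · exact ⟨1, by omega, by omega⟩
    · exact ⟨0, by omega, by omega⟩
  have hAm : 2 * i' < m := by omega
  have hBm : 2 * i' + 1 < m := by omega
  set A : Fin m := ⟨2 * i', hAm⟩ with hA
  set B : Fin m := ⟨2 * i' + 1, hBm⟩ with hB
  have hkA : (k : ℕ) ≠ 2 * i' := by omega
  have hkB : (k : ℕ) ≠ 2 * i' + 1 := by omega
  set t : F := (1 - b A - b B * a) * (b k)⁻¹ with htd
  set x : Fin m → F := fun i : Fin m =>
      if (i : ℕ) = (k : ℕ) then t else if (i : ℕ) = 2 * i' then 1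
        else if (i : ℕ) = 2 * i' + 1 then a else 0
    with hxd
  have hxval : ∀ (n : ℕ) (hn : n < m), n ≠ (k : ℕ) → n ≠ 2 * i' → n ≠ 2 * i' + 1 →
      x ⟨n, hn⟩ = 0 := by
    intro n hn h1 h2 h3
    rw [hxd]
    simp only [Fin.val_mk]
    rw [if_neg h1, if_neg h2, if_neg h3]
  have hxA : x A = 1 := by
    rw [hxd, hA]; simp only [Fin.val_mk]
    rw [if_neg (Ne.symm hkA)]
    simp
  have hxB : x B = a := by
    rw [hxd, hB]; simp only [Fin.val_mk]
    rw [if_neg (Ne.symm hkB), if_neg (by omega)]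
    simp
  have hxk : x k = t := by
    rw [hxd]; simp
  have hmemA : A ∉ ({B} : Finset (Fin m)) := by
    simp only [Finset.mem_singleton, hA, hB, ne_eq, Fin.ext_iff, Fin.val_mk]; omega
  have hmemk : k ∉ ({A, B} : Finset (Fin m)) := by
    simp only [Finset.mem_insert, Finset.mem_singleton, hA, hB, Fin.ext_iff, Fin.val_mk, not_or]
    exact ⟨hkA, hkB⟩
  refine ⟨x, ?_, ?_⟩
  · rw [Bform]
    rw [Finset.sum_eq_single_of_mem i' (Finset.mem_range.mpr hi'lt)]
    · rw [dif_pos (by omega : 2 * i' + 1 < m)]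
      rw [show x ⟨2 * i', by omega⟩ = 1 from hxA, show x ⟨2 * i' + 1, by omega⟩ = a from hxB,
        one_mul]
    · intro i hi hne
      rw [Finset.mem_range] at hi
      rw [dif_pos (by omega : 2 * i + 1 < m)]
      by_cases hc : 2 * i = (k : ℕ)
      · rw [hxval (2 * i + 1) (by omega) (by omega) (by omega) (by omega), mul_zero]
      · rw [hxval (2 * i) (by omega) hc (by omega) (by omega), zero_mul]
  · rw [Lfun_support b x {k, A, B}]
    · rw [Finset.sum_insert hmemk, Finset.sum_insert hmemA, Finset.sum_singleton]
      rw [hxA, hxB, hxk, htd]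
      have key : b k * ((1 - b A - b B * a) * (b k)⁻¹) + (b A * 1 + b B * a) = 1 := by
        field_simp
        ring
      rw [key]
      exact one_ne_zero
    · intro i hi
      simp only [Finset.mem_insert, Finset.mem_singleton, not_or] at hi
      obtain ⟨h1, h2, h3⟩ := hi
      have := hxval i.val i.isLt (fun h => h1 (Fin.ext h)) (fun h => h2 (Fin.ext h))
        (fun h => h3 (Fin.ext h))
      simpa using this

/-- The scalar fact needed for the case `r = 2`, `q ≥ 5`. -/
lemma aux_exists_t {F : Type*} [Field F] [Fintype F] [DecidableEq F]
    (hq5 : 5 ≤ Fintype.card F)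
    (a b0 b1 : F) (ha : a ≠ 0) (hb : b0 ≠ 0 ∨ b1 ≠ 0) :
    ∃ t : F, t ≠ 0 ∧ b0 * t + b1 * (a * t⁻¹) ≠ 0 := by
  rcases eq_or_ne b0 0 with hb0 | hb0
  · have hb1 : b1 ≠ 0 := by tauto
    refine ⟨1, one_ne_zero, ?_⟩
    simp [hb0]
    exact ⟨hb1, ha⟩
  · by_cases hs : ∃ s : F, s ^ 2 = -(b1 * a) * b0⁻¹
    · obtain ⟨s, hs⟩ := hs
      have h3 : ({0, s, -s} : Finset F).card ≤ 3 := by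
        refine le_trans (Finset.card_insert_le _ _) ?_
        refine Nat.succ_le_succ (le_trans (Finset.card_insert_le _ _) ?_)
        simp
      have hne : (Finset.univ \ ({0, s, -s} : Finset F)).Nonempty := by
        rw [← Finset.card_pos, Finset.card_sdiff_of_subset (Finset.subset_univ _), Finset.card_univ]
        omega
      obtain ⟨t, ht⟩ := hne
      rw [Finset.mem_sdiff, Finset.mem_insert, Finset.mem_insert, Finset.mem_singleton] at ht
      push_neg at ht
      obtain ⟨-, ht0, hts, htns⟩ := ht
      refine ⟨t, ht0, fun h => ?_⟩
      have h2 : b0 * t ^ 2 + b1 * a = 0 := by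
        field_simp at h
        linear_combination h
      have h2' : t ^ 2 = -(b1 * a) * b0⁻¹ := by
        field_simp
        linear_combination h2
      have hfac : (t - s) * (t + s) = 0 := by linear_combination h2' - hs
      rcases mul_eq_zero.mp hfac with h | h
      · exact hts (by linear_combination h)
      · exact htns (by linear_combination h)
    · push_neg at hs
      refine ⟨1, one_ne_zero, fun h => ?_⟩
      apply hs 1
      have : b0 + b1 * a = 0 := by field_simp at h; linear_combination h
      field_simp
      linear_combination this

/-- Case 3: `r = 2` and `q ≥ 5`. -/
lemma aux_case3 {F : Type*} [Field F] [Fintype F] [DecidableEq F] {m : ℕ}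
    (hq5 : 5 ≤ Fintype.card F) (h2m : 2 ≤ m)
    (a : F) (ha : a ≠ 0) (b : Fin m → F) (k : Fin m) (hk : b k ≠ 0)
    (hkr : (k : ℕ) < 2) :
    ∃ x : Fin m → F, Bform (2 / 2) x = a ∧ Lfun b x ≠ 0 := by
  have h0m : 0 < m := by omega
  have h1m : 1 < m := by omega
  set i0 : Fin m := ⟨0, h0m⟩ with hi0
  set i1 : Fin m := ⟨1, h1m⟩ with hi1
  have hb01 : b i0 ≠ 0 ∨ b i1 ≠ 0 := by
    have hk01 : k = i0 ∨ k = i1 := by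
      rcases eq_or_ne (k : ℕ) 0 with h | h
      · exact Or.inl (Fin.ext h)
      · exact Or.inr (Fin.ext (show (k : ℕ) = 1 by omega))
    rcases hk01 with h | h
    · exact Or.inl (h ▸ hk)
    · exact Or.inr (h ▸ hk)
  obtain ⟨t, ht0, ht⟩ := aux_exists_t hq5 a (b i0) (b i1) ha hb01
  set x : Fin m → F := fun i : Fin m =>
      if (i : ℕ) = 0 then t else if (i : ℕ) = 1 then a * t⁻¹ else 0
    with hxd
  have hxval : ∀ (n : ℕ) (hn : n < m), n ≠ 0 → n ≠ 1 → x ⟨n, hn⟩ = 0 := by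
    intro n hn h1 h2
    rw [hxd]
    simp only [Fin.val_mk]
    rw [if_neg h1, if_neg h2]
  have hx0 : x i0 = t := by rw [hxd, hi0]; simp
  have hx1 : x i1 = a * t⁻¹ := by rw [hxd, hi1]; simp
  have hmem0 : i0 ∉ ({i1} : Finset (Fin m)) := by
    simp only [Finset.mem_singleton, hi0, hi1, Fin.ext_iff, Fin.val_mk]; omega
  refine ⟨x, ?_, ?_⟩
  · rw [Bform, Finset.sum_range_one, dif_pos (by omega : 2 * 0 + 1 < m)]
    rw [show x ⟨2 * 0, by omega⟩ = t from hx0, show x ⟨2 * 0 + 1, by omega⟩ = a * t⁻¹ from hx1]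
    field_simp
  · rw [Lfun_support b x {i0, i1}]
    · rw [Finset.sum_insert hmem0, Finset.sum_singleton, hx0, hx1]
      exact ht
    · intro i hi
      simp only [Finset.mem_insert, Finset.mem_singleton, not_or] at hi
      obtain ⟨h1, h2⟩ := hi
      have := hxval i.val i.isLt (fun h => h1 (Fin.ext h)) (fun h => h2 (Fin.ext h))
      simpa using this

/-- Key lemma: all cases combined. -/
lemma aux_key {F : Type*} [Field F] [Fintype F] [DecidableEq F] {m r : ℕ}
    (hreven : Even r) (hr2 : 2 ≤ r) (hrm : r ≤ m)
    (hr : 4 ≤ r ∨ 5 ≤ Fintype.card F)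
    (a : F) (ha : a ≠ 0) (b : Fin m → F) (hb : b ≠ 0) :
    ∃ x : Fin m → F, Bform (r / 2) x = a ∧ Lfun b x ≠ 0 := by
  obtain ⟨k, hk⟩ : ∃ k, b k ≠ 0 := by
    by_contra h
    push_neg at h
    exact hb (funext fun i => h i)
  rcases le_or_gt r (k : ℕ) with hkr | hkr
  · exact aux_case1 hreven hr2 hrm a b k hk hkr
  · rcases Nat.lt_or_ge r 4 with hr4 | hr4
    · have hre : r = 2 := by obtain ⟨c, hc⟩ := hreven; omega
      have hq5 : 5 ≤ Fintype.card F := by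
        rcases hr with h | h
        · omega
        · exact h
      subst hre
      exact aux_case3 hq5 hrm a ha b k hk hkr
    · exact aux_case2 hreven hr4 hrm a b k hk hkr

theorem statement19 (p e q m r : ℕ) (F : Type*) [Field F] [Fintype F] [DecidableEq F]
    (hp : p.Prime) (hpodd : Odd p) (he : 0 < e) (hq : q = p ^ e)
    (hcard : Fintype.card F = q)
    (hreven : Even r) (hr2 : 2 ≤ r) (hrm : r ≤ m)
    (hr : 4 ≤ r ∨ 5 ≤ q)
    (a : F) (ha : a ≠ 0) :
    -- the map b ↦ c_b = (L_b(x))_{x ∈ D} is injective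
    Function.Injective (fun b : Fin m → F =>
      fun x : {x : Fin m → F // Bform (r / 2) x = a} => Lfun b x.1) ∧
    -- equivalently, every nonzero b gives a nonzero codeword
    (∀ b : Fin m → F, b ≠ 0 → ∃ x : Fin m → F, Bform (r / 2) x = a ∧ Lfun b x ≠ 0) ∧
    -- in particular, the code has exactly q^m codewords
    Nat.card (Set.range (fun b : Fin m → F =>
      fun x : {x : Fin m → F // Bform (r / 2) x = a} => Lfun b x.1)) = q ^ m := by
  have hr' : 4 ≤ r ∨ 5 ≤ Fintype.card F := by rw [hcard]; exact hr
  have key : ∀ b : Fin m → F, b ≠ 0 →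
      ∃ x : Fin m → F, Bform (r / 2) x = a ∧ Lfun b x ≠ 0 :=
    fun b hb => aux_key hreven hr2 hrm hr' a ha b hb
  have linj : Function.Injective (fun b : Fin m → F =>
      fun x : {x : Fin m → F // Bform (r / 2) x = a} => Lfun b x.1) := by
    intro b1 b2 h
    by_contra hne
    obtain ⟨x, hx, hL⟩ := key (b1 - b2) (sub_ne_zero.mpr hne)
    apply hL
    have h1 := congrFun h ⟨x, hx⟩
    simp only at h1
    have expand : Lfun (b1 - b2) x = Lfun b1 x - Lfun b2 x := by
      simp [Lfun, sub_mul, Finset.sum_sub_distrib]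
    rw [expand, h1, sub_self]
  refine ⟨linj, key, ?_⟩
  rw [Nat.card_range_of_injective linj, Nat.card_eq_fintype_card, Fintype.card_fun,
    hcard, Fintype.card_fin]
end
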